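/- arXiv:1812.08958 — 6 statements merged into one kernel-verified Lean document; each statement's English description precedes it below -/
import Mathlib

section
/- There is a universal constant c > 0 such that for every finite undirected graph G = (V,E) with m ≥ 2 edges and every parameter φ ∈ (0,1), there exists a partition V_1, …, V_k of V such that for every i the induced subgraph G[V_i] has conductance Φ_{G[V_i]} ≥ φ, and the total number of inter-cluster edges satisfies ∑_i δ_G(V_i) ≤ c·φ·m·log m. -/
/-!
A cluster `A` that is not a `φ`-expander splits as `A = S ∪ T` with
`|E(S,T)| < φ·min(vol S, vol T)`; cut along it and recurse on both sides. Charging the cut edges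
to the smaller side, the potential `2φ · vol · log₂ vol` pays for all of them, because
`a log₂ a + b log₂ b + min(a, b) ≤ (a + b) log₂ (a + b)`: the smaller side has at most half
the volume, so its logarithm drops by one. At the top level `vol V = 2m`.
-/

open Finset

noncomputable section
open scoped Classical

/-- `|E_G(S,T)|`: the number of edges of `G` with one endpoint in `S` and the other in `T`
(for disjoint `S`, `T` this equals the number of such edges). -/
def eCount {V : Type*} [Fintype V] [DecidableEq V] (G : SimpleGraph V) (S T : Finset V) : ℕ :=
  ((S ×ˢ T).filter fun p => G.Adj p.1 p.2).card

/-- Degree of `v` inside the induced subgraph `G[A]`. -/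
def degIn {V : Type*} [Fintype V] [DecidableEq V] (G : SimpleGraph V) (A : Finset V) (v : V) : ℕ :=
  (A.filter fun u => G.Adj v u).card

/-- Volume of `S` inside the induced subgraph `G[A]`. -/
def volIn {V : Type*} [Fintype V] [DecidableEq V] (G : SimpleGraph V) (A S : Finset V) : ℕ :=
  ∑ v ∈ S, degIn G A v

namespace Real

lemma mul_logb_add_mul_logb_add_min_le {a b : ℝ} (ha : 0 < a) (hb : 0 < b) :
    a * logb 2 a + b * logb 2 b + min a b ≤ (a + b) * logb 2 (a + b) := by
  wlog hab : a ≤ b generalizing a b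
  · simpa only [add_comm, min_comm] using this hb ha (le_of_not_ge hab)
  have half : logb 2 a ≤ logb 2 (a + b) - 1 := by
    rw [← logb_self_eq_one one_lt_two, ← logb_div (by positivity) two_ne_zero]
    exact logb_le_logb_of_le one_lt_two ha (by linarith)
  have whole : logb 2 b ≤ logb 2 (a + b) := logb_le_logb_of_le one_lt_two hb (by linarith)
  rw [min_eq_left hab]
  linarith [mul_le_mul_of_nonneg_left half ha.le, mul_le_mul_of_nonneg_left whole hb.le]

lemma natCast_logb_two_nonneg (n : ℕ) : 0 ≤ logb 2 n :=
  div_nonneg (log_natCast_nonneg n) (log_nonneg one_le_two)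

lemma natCast_mul_logb_two_mono : Monotone fun n : ℕ => (n : ℝ) * logb 2 n := by
  intro m n hmn
  rcases m.eq_zero_or_pos with rfl | hm
  · simpa using mul_nonneg n.cast_nonneg (natCast_logb_two_nonneg n)
  · have hm' : (1 : ℝ) ≤ m := by exact_mod_cast hm
    have hmn' : (m : ℝ) ≤ n := by exact_mod_cast hmn
    exact mul_le_mul hmn' (logb_le_logb_of_le one_lt_two (by linarith) hmn')
      (logb_nonneg one_lt_two hm') (by linarith)

lemma logb_two_mul_le_two_mul_logb {x : ℝ} (hx : 2 ≤ x) : logb 2 (2 * x) ≤ 2 * logb 2 x := by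
  have : 1 ≤ logb 2 x := by
    rw [← logb_self_eq_one one_lt_two]
    exact logb_le_logb_of_le one_lt_two two_pos hx
  rw [logb_mul two_ne_zero (by linarith), logb_self_eq_one one_lt_two]
  linarith

end Real

def Finpartition.disjUnion {α : Type*} [DecidableEq α] {s t u : Finset α}
    (P : Finpartition s) (Q : Finpartition t) (hst : Disjoint s t) (hu : s ∪ t = u) :
    Finpartition u where
  parts := P.parts ∪ Q.parts
  supIndep := by
    rw [supIndep_iff_pairwiseDisjoint, coe_union]
    exact P.disjoint.union Q.disjoint fun B hB C hC _ => hst.mono (P.le hB) (Q.le hC)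
  sup_parts := by rw [sup_union, P.sup_parts, Q.sup_parts, ← hu]; rfl
  bot_notMem := by simp only [mem_union, P.bot_notMem, Q.bot_notMem, or_self, not_false_eq_true]

lemma Finpartition.disjoint_parts {α : Type*} [DecidableEq α] {s t : Finset α}
    (P : Finpartition s) (Q : Finpartition t) (hst : Disjoint s t) : Disjoint P.parts Q.parts :=
  disjoint_left.2 fun _ hP hQ => P.ne_bot hP (disjoint_self.1 (hst.mono (P.le hP) (Q.le hQ)))

section Graph

variable {V : Type*} [Fintype V] [DecidableEq V] (G : SimpleGraph V)

/-- `G[A]` has conductance at least `φ`. -/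
def IsExpander (φ : ℝ) (A : Finset V) : Prop :=
  ∀ S ⊆ A, S.Nonempty → S ≠ A →
    φ * min (volIn G A S : ℝ) (volIn G A (A \ S) : ℝ) ≤ (eCount G S (A \ S) : ℝ)

/-- `∑ᵢ δ(Aᵢ)` for a partition of `A`, counting only edges inside `A`. -/
def boundaryCount {A : Finset V} (P : Finpartition A) : ℕ :=
  ∑ B ∈ P.parts, eCount G B (A \ B)

lemma eCount_eq_sum (S T : Finset V) :
    eCount G S T = ∑ v ∈ S, ∑ u ∈ T, if G.Adj v u then 1 else 0 := by
  rw [eCount, card_filter, sum_product]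

lemma eCount_comm (S T : Finset V) : eCount G S T = eCount G T S := by
  rw [eCount_eq_sum, eCount_eq_sum, sum_comm]
  simp_rw [G.adj_comm]

lemma eCount_union_right {T₁ T₂ : Finset V} (h : Disjoint T₁ T₂) (S : Finset V) :
    eCount G S (T₁ ∪ T₂) = eCount G S T₁ + eCount G S T₂ := by
  simp_rw [eCount_eq_sum, ← sum_add_distrib]
  exact sum_congr rfl fun v _ => sum_union h

lemma Finpartition.sum_eCount {A : Finset V} (P : Finpartition A) (T : Finset V) :
    ∑ B ∈ P.parts, eCount G B T = eCount G A T := by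
  simp_rw [eCount_eq_sum]
  conv_rhs => rw [← P.biUnion_parts]
  exact (sum_biUnion P.disjoint).symm

lemma volIn_add_volIn_sdiff {A S : Finset V} (h : S ⊆ A) :
    volIn G A S + volIn G A (A \ S) = volIn G A A := by
  rw [volIn, volIn, add_comm, sum_sdiff h, volIn]

lemma volIn_mono_left {A A' : Finset V} (h : A ⊆ A') (S : Finset V) :
    volIn G A S ≤ volIn G A' S :=
  sum_le_sum fun _ _ => card_le_card (filter_subset_filter _ h)

lemma volIn_univ_univ : volIn G univ univ = 2 * #G.edgeFinset := by
  rw [← G.sum_degrees_eq_twice_card_edges, volIn]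
  refine sum_congr rfl fun v _ => ?_
  rw [degIn, ← G.card_neighborFinset_eq_degree, G.neighborFinset_eq_filter]

lemma boundaryCount_top (A : Finset V) : boundaryCount G (⊤ : Finpartition A) = 0 :=
  sum_eq_zero fun B hB => by
    rw [mem_singleton.1 (Finpartition.parts_top_subset A hB), sdiff_self]
    simp [eCount]

lemma sum_eCount_union_sdiff {S T : Finset V} (hST : Disjoint S T) (P : Finpartition S) :
    ∑ B ∈ P.parts, eCount G B ((S ∪ T) \ B) = boundaryCount G P + eCount G S T := by
  have split : ∀ B ∈ P.parts, eCount G B ((S ∪ T) \ B) = eCount G B (S \ B) + eCount G B T :=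
    fun B hB => by
      rw [union_sdiff_distrib, sdiff_eq_self_of_disjoint (hST.mono_left (P.le hB)).symm,
        eCount_union_right G (hST.mono_left sdiff_subset)]
  rw [sum_congr rfl split, sum_add_distrib, P.sum_eCount, boundaryCount]

lemma boundaryCount_disjUnion {S T A : Finset V} (P : Finpartition S) (Q : Finpartition T)
    (hST : Disjoint S T) (hA : S ∪ T = A) :
    boundaryCount G (P.disjUnion Q hST hA) =
      boundaryCount G P + boundaryCount G Q + 2 * eCount G S T := by
  subst hA
  rw [boundaryCount, Finpartition.disjUnion, sum_union (P.disjoint_parts Q hST),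
    sum_eCount_union_sdiff G hST, union_comm, sum_eCount_union_sdiff G hST.symm, eCount_comm G T]
  ring

theorem exists_expander_finpartition {φ : ℝ} (hφ : 0 < φ) (A : Finset V) :
    ∃ P : Finpartition A, (∀ B ∈ P.parts, IsExpander G φ B) ∧
      (boundaryCount G P : ℝ) ≤ 2 * φ * volIn G A A * Real.logb 2 (volIn G A A) := by
  induction hn : volIn G A A using Nat.strong_induction_on generalizing A with
  | _ n ih =>
  by_cases hA : IsExpander G φ A
  · refine ⟨⊤, fun B hB => mem_singleton.1 (Finpartition.parts_top_subset A hB) ▸ hA, ?_⟩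
    rw [boundaryCount_top, Nat.cast_zero]
    exact mul_nonneg (by positivity) (Real.natCast_logb_two_nonneg n)
  obtain ⟨S, hSA, -, -, hcut⟩ : ∃ S ⊆ A, S.Nonempty ∧ S ≠ A ∧
      (eCount G S (A \ S) : ℝ) < φ * min (volIn G A S : ℝ) (volIn G A (A \ S) : ℝ) := by
    simpa [IsExpander] using hA
  set T := A \ S
  set a := volIn G A S
  set b := volIn G A T
  have hab : a + b = n := hn ▸ volIn_add_volIn_sdiff G hSA
  have hmin : 0 < min (a : ℝ) b := pos_of_mul_pos_right ((Nat.cast_nonneg _).trans_lt hcut) hφ.le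
  have ha : 0 < (a : ℝ) := hmin.trans_le (min_le_left _ _)
  have hb : 0 < (b : ℝ) := hmin.trans_le (min_le_right _ _)
  have ha' : 0 < a := Nat.cast_pos.1 ha
  have hb' : 0 < b := Nat.cast_pos.1 hb
  have hSa : volIn G S S ≤ a := volIn_mono_left G hSA S
  have hTb : volIn G T T ≤ b := volIn_mono_left G sdiff_subset T
  obtain ⟨P, hP, hPcost⟩ := ih _ (by omega) S rfl
  obtain ⟨Q, hQ, hQcost⟩ := ih _ (by omega) T rfl
  refine ⟨P.disjUnion Q disjoint_sdiff (union_sdiff_of_subset hSA), ?_, ?_⟩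
  · simpa [Finpartition.disjUnion, or_imp, forall_and] using ⟨hP, hQ⟩
  have hPa : (boundaryCount G P : ℝ) ≤ 2 * φ * (a * Real.logb 2 a) :=
    hPcost.trans <| (mul_assoc ..).trans_le <|
      mul_le_mul_of_nonneg_left (Real.natCast_mul_logb_two_mono hSa) (by positivity)
  have hQb : (boundaryCount G Q : ℝ) ≤ 2 * φ * (b * Real.logb 2 b) :=
    hQcost.trans <| (mul_assoc ..).trans_le <|
      mul_le_mul_of_nonneg_left (Real.natCast_mul_logb_two_mono hTb) (by positivity)
  rw [boundaryCount_disjUnion, ← hab]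
  push_cast
  calc (boundaryCount G P : ℝ) + boundaryCount G Q + 2 * eCount G S T
      ≤ 2 * φ * (a * Real.logb 2 a + b * Real.logb 2 b + min (a : ℝ) b) := by linarith
    _ ≤ 2 * φ * ((a + b) * Real.logb 2 (a + b)) := by
      gcongr; exact Real.mul_logb_add_mul_logb_add_min_le ha hb
    _ = 2 * φ * (a + b) * Real.logb 2 (a + b) := by ring

end Graph

theorem ideal_expander_decomposition :
    ∃ c : ℝ, 0 < c ∧
      ∀ (V : Type) [Fintype V] [DecidableEq V] (G : SimpleGraph V) (φ : ℝ),
        2 ≤ G.edgeFinset.card → 0 < φ → φ < 1 →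
        ∃ P : Finpartition (Finset.univ : Finset V),
          -- every cluster induces a subgraph of conductance at least φ
          (∀ A ∈ P.parts, ∀ S ⊆ A, S.Nonempty → S ≠ A →
            φ * min (volIn G A S : ℝ) (volIn G A (A \ S) : ℝ) ≤ (eCount G S (A \ S) : ℝ)) ∧
          -- the total number of inter-cluster edges is at most c·φ·m·log m
          ((∑ A ∈ P.parts, eCount G A Aᶜ : ℕ) : ℝ) ≤
            c * φ * G.edgeFinset.card * Real.log G.edgeFinset.card := by
  refine ⟨8 / Real.log 2, by positivity, fun V _ _ G φ hm hφ _ => ?_⟩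
  obtain ⟨P, hP, hcost⟩ := exists_expander_finpartition G hφ univ
  refine ⟨P, hP, ?_⟩
  have hm' : (2 : ℝ) ≤ #G.edgeFinset := by exact_mod_cast hm
  simp_rw [compl_eq_univ_sdiff]
  rw [volIn_univ_univ] at hcost
  push_cast at hcost
  calc ((∑ A ∈ P.parts, eCount G A (univ \ A) : ℕ) : ℝ)
      ≤ 2 * φ * (2 * #G.edgeFinset) * Real.logb 2 (2 * #G.edgeFinset) := hcost
    _ ≤ 2 * φ * (2 * #G.edgeFinset) * (2 * Real.logb 2 #G.edgeFinset) := by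
      gcongr; exact Real.logb_two_mul_le_two_mul_logb hm'
    _ = 8 / Real.log 2 * φ * #G.edgeFinset * Real.log #G.edgeFinset := by
      rw [Real.logb]; ring
end
end

section
/- There exist universal constants c₀, c₁ > 0 such that for every finite undirected graph G = (V,E) with m ≥ 2 edges and every φ ∈ (0,1), at least one of the following holds: (1) Φ_G ≥ φ; (2) there exists a partition (A, Ā) of V with Φ_G(Ā) ≤ c₀·φ·(log m)² and min(vol_G(A), vol_G(Ā)) ≥ m/(c₁·(log m)²); or (3) there exists a partition (A, Ā) of V with Φ_G(Ā) ≤ c₀·φ·(log m)², vol_G(Ā) ≤ m/(10·c₀·(log m)²), and A a nearly φ expander in G. -/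
/-!
STATEMENT 4 (Cut-Matching, Theorem 2.2):
There are universal constants `c₀, c₁ > 0` such that for every finite graph `G` with
`m ≥ 2` edges and every `φ ∈ (0,1)`, one of the following holds:
(1) `Φ_G ≥ φ`;
(2) there is a partition `(A, Ā)` with `Φ_G(Ā) ≤ c₀·φ·(log m)²` and
    `min(vol(A), vol(Ā)) ≥ m/(c₁·(log m)²)`;
(3) there is a partition `(A, Ā)` with `Φ_G(Ā) ≤ c₀·φ·(log m)²`,
    `vol(Ā) ≤ m/(10·c₀·(log m)²)`, and `A` a nearly `φ` expander in `G`.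
-/

open Finset

noncomputable section
open scoped Classical

/-- `vol_G(S) = ∑_{v ∈ S} deg_G(v)`. -/
def vol {V : Type*} [Fintype V] [DecidableEq V] (G : SimpleGraph V) (S : Finset V) : ℕ :=
  ∑ v ∈ S, G.degree v


/-!
Take a set `S` of maximum volume among the sets with `vol S ≤ m` and `δ(S) ≤ φ·vol S` (the empty
set is one). If `vol S` is not tiny, `(Sᶜ, S)` is a balanced sparse cut. Otherwise either `Sᶜ` is
a nearly `φ` expander, or it contains a set `T` with `vol T ≤ vol Sᶜ / 2` and `δ(T) < φ·vol T`;
then `S ∪ T` is again sparse, so by maximality its volume exceeds `m`, and since `vol T` is at most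
about `m` the cut `(S ∪ T, (S ∪ T)ᶜ)` is balanced. All cuts found have conductance at most `2φ`;
the factor `(log m)²` only absorbs constants.
-/

section

variable {V : Type*} [Fintype V] [DecidableEq V] (G : SimpleGraph V)

lemma eCount_union_compl_le (S T : Finset V) :
    eCount G (S ∪ T) (S ∪ T)ᶜ ≤ eCount G S Sᶜ + eCount G T Tᶜ := by
  unfold eCount
  refine (card_le_card fun p hp => ?_).trans (card_union_le _ _)
  simp only [mem_filter, mem_product, mem_union, mem_compl, not_or] at hp ⊢
  obtain ⟨⟨hS | hT, hnS, hnT⟩, hadj⟩ := hp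
  · exact Or.inl ⟨⟨hS, hnS⟩, hadj⟩
  · exact Or.inr ⟨⟨hT, hnT⟩, hadj⟩

lemma vol_union_of_disjoint {S T : Finset V} (h : Disjoint S T) :
    vol G (S ∪ T) = vol G S + vol G T :=
  sum_union h

lemma vol_add_vol_compl (S : Finset V) : vol G S + vol G Sᶜ = 2 * G.edgeFinset.card := by
  rw [vol, vol, sum_add_sum_compl, G.sum_degrees_eq_twice_card_edges]

lemma vol_compl_eq (S : Finset V) :
    (vol G Sᶜ : ℝ) = 2 * G.edgeFinset.card - vol G S := by
  have := vol_add_vol_compl G S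
  rw [eq_sub_iff_add_eq']
  exact_mod_cast this

def IsSparse (φ : ℝ) (S : Finset V) : Prop :=
  (eCount G S Sᶜ : ℝ) ≤ φ * vol G S

def IsNearlyExpander (φ : ℝ) (A : Finset V) : Prop :=
  ∀ S ⊆ A, (vol G S : ℝ) ≤ vol G A / 2 → φ * vol G S ≤ eCount G S Sᶜ

variable {G}

lemma isSparse_empty (φ : ℝ) : IsSparse G φ ∅ := by
  simp [IsSparse, eCount, vol]

lemma IsSparse.union_of_disjoint {φ : ℝ} {S T : Finset V} (hS : IsSparse G φ S)
    (hT : IsSparse G φ T) (h : Disjoint S T) : IsSparse G φ (S ∪ T) := by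
  have hcut : (eCount G (S ∪ T) (S ∪ T)ᶜ : ℝ) ≤ eCount G S Sᶜ + eCount G T Tᶜ := by
    exact_mod_cast eCount_union_compl_le G S T
  unfold IsSparse at *
  rw [vol_union_of_disjoint G h]
  push_cast
  linarith

lemma IsSparse.eCount_le_two_mul_min {φ : ℝ} {S : Finset V} (hS : IsSparse G φ S)
    (hφ : 0 ≤ φ) (h : (vol G S : ℝ) ≤ 2 * vol G Sᶜ) :
    (eCount G S Sᶜ : ℝ) ≤ 2 * φ * min (vol G S : ℝ) (vol G Sᶜ) := by
  have hvol : (0 : ℝ) ≤ vol G S := Nat.cast_nonneg _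
  unfold IsSparse at hS
  rcases min_cases (vol G S : ℝ) (vol G Sᶜ) with ⟨hmin, -⟩ | ⟨hmin, -⟩ <;> rw [hmin]
  · nlinarith
  · nlinarith

lemma exists_isSparse_max_vol (φ : ℝ) :
    ∃ S : Finset V, (vol G S : ℝ) ≤ G.edgeFinset.card ∧ IsSparse G φ S ∧
      ∀ T : Finset V, (vol G T : ℝ) ≤ G.edgeFinset.card → IsSparse G φ T → vol G T ≤ vol G S := by
  let F := univ.filter fun S : Finset V => (vol G S : ℝ) ≤ G.edgeFinset.card ∧ IsSparse G φ S
  have hempty : ∅ ∈ F := by simp [F, vol, isSparse_empty]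
  obtain ⟨S, hSF, hmax⟩ := exists_max_image F (vol G) ⟨∅, hempty⟩
  simp only [F, mem_filter, mem_univ, true_and] at hSF hmax
  exact ⟨S, hSF.1, hSF.2, fun T hT hTs => hmax T ⟨hT, hTs⟩⟩

lemma IsSparse.union_of_max_vol {φ : ℝ} {S T : Finset V} (hS : IsSparse G φ S)
    (hSmax : ∀ U : Finset V, (vol G U : ℝ) ≤ G.edgeFinset.card → IsSparse G φ U →
      vol G U ≤ vol G S)
    (hTS : T ⊆ Sᶜ) (hThalf : (vol G T : ℝ) ≤ vol G Sᶜ / 2)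
    (hT : (eCount G T Tᶜ : ℝ) < φ * vol G T) :
    IsSparse G φ (S ∪ T) ∧ (G.edgeFinset.card : ℝ) < vol G (S ∪ T) ∧
      (vol G (S ∪ T) : ℝ) ≤ G.edgeFinset.card + vol G S / 2 := by
  have hdisj : Disjoint S T := disjoint_left.mpr fun _ hS hT => mem_compl.mp (hTS hT) hS
  have hvol : (vol G (S ∪ T) : ℝ) = vol G S + vol G T := by
    exact_mod_cast vol_union_of_disjoint G hdisj
  have hTpos : (0 : ℝ) < vol G T := by
    by_contra! h
    have h0 : (vol G T : ℝ) = 0 := le_antisymm h (Nat.cast_nonneg _)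
    rw [h0, mul_zero] at hT
    exact (Nat.cast_nonneg _).not_gt hT
  have hU : IsSparse G φ (S ∪ T) := hS.union_of_disjoint hT.le hdisj
  refine ⟨hU, ?_, ?_⟩
  · by_contra! hUm
    have := hSmax _ hUm hU
    have : (vol G (S ∪ T) : ℝ) ≤ vol G S := by exact_mod_cast this
    linarith
  · rw [vol_compl_eq] at hThalf
    linarith

theorem exists_balanced_sparse_cut_or_nearly_expander {φ b : ℝ} (hφ : 0 ≤ φ)
    (hb : b ≤ 2 * G.edgeFinset.card / 3) :
    (∃ A : Finset V, (eCount G Aᶜ A : ℝ) ≤ 2 * φ * min (vol G Aᶜ : ℝ) (vol G A) ∧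
        b ≤ min (vol G A : ℝ) (vol G Aᶜ)) ∨
    (∃ A : Finset V, (eCount G Aᶜ A : ℝ) ≤ 2 * φ * min (vol G Aᶜ : ℝ) (vol G A) ∧
        (vol G Aᶜ : ℝ) ≤ b ∧ IsNearlyExpander G φ A) := by
  obtain ⟨S, hSm, hS, hSmax⟩ := exists_isSparse_max_vol (G := G) φ
  have hSc := vol_compl_eq G S
  have hcutS : (eCount G Sᶜᶜ Sᶜ : ℝ) ≤ 2 * φ * min (vol G Sᶜᶜ : ℝ) (vol G Sᶜ) := by
    rw [compl_compl]
    exact hS.eCount_le_two_mul_min hφ (by linarith)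
  by_cases hbS : b ≤ vol G S
  · left
    refine ⟨Sᶜ, hcutS, ?_⟩
    rw [compl_compl, min_eq_right (by linarith)]
    exact hbS
  by_cases hexp : IsNearlyExpander G φ Sᶜ
  · right
    exact ⟨Sᶜ, hcutS, by rw [compl_compl]; linarith, hexp⟩
  left
  obtain ⟨T, hTS, hThalf, hT⟩ : ∃ T ⊆ Sᶜ, (vol G T : ℝ) ≤ vol G Sᶜ / 2 ∧
      (eCount G T Tᶜ : ℝ) < φ * vol G T := by
    simpa [IsNearlyExpander] using hexp
  obtain ⟨hU, hUm, hUle⟩ := hS.union_of_max_vol hSmax hTS hThalf hT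
  have hUc := vol_compl_eq G (S ∪ T)
  refine ⟨S ∪ T, ?_, ?_⟩
  · rw [eCount_comm, min_comm]
    exact hU.eCount_le_two_mul_min hφ (by linarith)
  · rw [min_eq_right (by linarith)]
    linarith

end

lemma two_fifths_le_log_sq {x : ℝ} (hx : 2 ≤ x) : 2 / 5 ≤ Real.log x ^ 2 := by
  have hlog : Real.log 2 ≤ Real.log x := Real.log_le_log (by norm_num) hx
  nlinarith [Real.log_two_gt_d9]

theorem cut_matching :
    ∃ c₀ c₁ : ℝ, 0 < c₀ ∧ 0 < c₁ ∧
      ∀ (V : Type) [Fintype V] [DecidableEq V] (G : SimpleGraph V) (φ : ℝ),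
        2 ≤ G.edgeFinset.card → 0 < φ → φ < 1 →
        -- case (1): G has conductance Φ_G ≥ φ
        (∀ S : Finset V, S.Nonempty → S ≠ Finset.univ →
          φ * min (vol G S : ℝ) (vol G Sᶜ : ℝ) ≤ (eCount G S Sᶜ : ℝ)) ∨
        -- case (2): a relatively balanced cut of conductance O(φ log² m)
        (∃ A : Finset V,
          (eCount G Aᶜ A : ℝ) ≤
            c₀ * φ * (Real.log G.edgeFinset.card) ^ 2 * min (vol G Aᶜ : ℝ) (vol G A : ℝ) ∧
          (G.edgeFinset.card : ℝ) / (c₁ * (Real.log G.edgeFinset.card) ^ 2) ≤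
            min (vol G A : ℝ) (vol G Aᶜ : ℝ)) ∨
        -- case (3): a very unbalanced cut whose large side is a nearly φ expander
        (∃ A : Finset V,
          (eCount G Aᶜ A : ℝ) ≤
            c₀ * φ * (Real.log G.edgeFinset.card) ^ 2 * min (vol G Aᶜ : ℝ) (vol G A : ℝ) ∧
          (vol G Aᶜ : ℝ) ≤
            (G.edgeFinset.card : ℝ) / (10 * c₀ * (Real.log G.edgeFinset.card) ^ 2) ∧
          (∀ S ⊆ A, (vol G S : ℝ) ≤ (vol G A : ℝ) / 2 →
            φ * (vol G S : ℝ) ≤ (eCount G S Sᶜ : ℝ))) := by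
  refine ⟨5, 50, by norm_num, by norm_num, fun V _ _ G φ hm hφ _ => ?_⟩
  set m : ℝ := (G.edgeFinset.card : ℝ)
  set L := Real.log m ^ 2
  have hL : 2 / 5 ≤ L := two_fifths_le_log_sq (Nat.ofNat_le_cast.mpr hm)
  have hm₀ : 0 ≤ m := Nat.cast_nonneg _
  have hφL : 2 * φ ≤ 5 * φ * L := by nlinarith
  have hcut : ∀ A : Finset V, (eCount G Aᶜ A : ℝ) ≤ 2 * φ * min (vol G Aᶜ : ℝ) (vol G A) →
      (eCount G Aᶜ A : ℝ) ≤ 5 * φ * L * min (vol G Aᶜ : ℝ) (vol G A) := fun A hA =>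
    hA.trans (mul_le_mul_of_nonneg_right hφL (by positivity))
  have hb : m / (50 * L) ≤ 2 * m / 3 := by
    rw [div_le_div_iff₀ (by positivity) (by norm_num)]
    nlinarith
  rcases exists_balanced_sparse_cut_or_nearly_expander hφ.le hb with
    ⟨A, hA, hbal⟩ | ⟨A, hA, hsmall, hexp⟩
  · exact Or.inr (Or.inl ⟨A, hcut A hA, hbal⟩)
  · refine Or.inr (Or.inr ⟨A, hcut A hA, ?_, hexp⟩)
    rwa [show (10 : ℝ) * 5 * L = 50 * L by ring]
end
end

section
/- There is a universal constant c > 0 such that for every finite undirected weighted graph G = (V,E,w) with m ≥ 2 edges, edge weights w : E → ℝ_{>0}, and total weight W = ∑_{e∈E} w(e), and every φ ∈ (0,1), there exists a partition V_1, …, V_k of V such that Φ^w_{G{V_i}} ≥ φ for every i, and ∑_i δ_w(V_i) ≤ c·φ·W·(log m)^3. -/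
/-!
STATEMENT 13 (Weighted expander decomposition, Theorem 4.1):
There is a universal constant `c > 0` such that for every finite undirected weighted
graph `G = (V,E,w)` with `m ≥ 2` edges, positive edge weights and total weight
`W = ∑_e w(e)`, and every `φ ∈ (0,1)`, there is a partition `V₁,…,V_k` of `V` with
`Φ^w_{G{Vᵢ}} ≥ φ` for every `i` and `∑ᵢ δ_w(Vᵢ) ≤ c·φ·W·(log m)³`.
-/

open Finset

noncomputable section
open scoped Classical

/-- Weighted degree `deg_w(v) = ∑_{e ∋ v} w(e)`. -/
def wdeg {V : Type*} [Fintype V] [DecidableEq V] (G : SimpleGraph V) (w : Sym2 V → ℝ)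
    (v : V) : ℝ :=
  ∑ e ∈ G.edgeFinset.filter fun e => v ∈ e, w e

/-- Weighted volume `vol_w(S) = ∑_{v ∈ S} deg_w(v)`. -/
def wvol {V : Type*} [Fintype V] [DecidableEq V] (G : SimpleGraph V) (w : Sym2 V → ℝ)
    (S : Finset V) : ℝ :=
  ∑ v ∈ S, wdeg G w v

/-- `w(E(S,T))`: total weight of edges with one endpoint in `S` and the other in `T`. -/
def wE {V : Type*} [Fintype V] [DecidableEq V] (G : SimpleGraph V) (w : Sym2 V → ℝ)
    (S T : Finset V) : ℝ :=
  ∑ p ∈ (S ×ˢ T).filter fun p => G.Adj p.1 p.2, w s(p.1, p.2)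

section Aux

variable {V : Type*} [Fintype V] [DecidableEq V] (G : SimpleGraph V) (w : Sym2 V → ℝ)

lemma wE_eq (S T : Finset V) :
    wE G w S T = ∑ u ∈ S, ∑ v ∈ T, if G.Adj u v then w s(u, v) else 0 := by
  rw [wE, Finset.sum_filter, Finset.sum_product]

variable {G w}

variable (hw : ∀ e ∈ G.edgeFinset, 0 < w e)
include hw

lemma w_pos_of_adj {u v : V} (h : G.Adj u v) : 0 < w s(u, v) :=
  hw _ (by rwa [SimpleGraph.mem_edgeFinset, SimpleGraph.mem_edgeSet])

lemma wE_nonneg (S T : Finset V) : 0 ≤ wE G w S T := by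
  rw [wE_eq]
  refine Finset.sum_nonneg fun u _ => Finset.sum_nonneg fun v _ => ?_
  split_ifs with h
  · exact (w_pos_of_adj hw h).le
  · exact le_refl 0

omit hw

lemma wE_comm (S T : Finset V) : wE G w S T = wE G w T S := by
  rw [wE_eq, wE_eq, Finset.sum_comm]
  refine Finset.sum_congr rfl fun v _ => Finset.sum_congr rfl fun u _ => ?_
  rw [Sym2.eq_swap, G.adj_comm]

lemma wE_union_left {S₁ S₂ : Finset V} (h : Disjoint S₁ S₂) (T : Finset V) :
    wE G w (S₁ ∪ S₂) T = wE G w S₁ T + wE G w S₂ T := by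
  rw [wE_eq, wE_eq, wE_eq, Finset.sum_union h]

lemma wE_union_right (S : Finset V) {T₁ T₂ : Finset V} (h : Disjoint T₁ T₂) :
    wE G w S (T₁ ∪ T₂) = wE G w S T₁ + wE G w S T₂ := by
  rw [wE_eq, wE_eq, wE_eq, ← Finset.sum_add_distrib]
  exact Finset.sum_congr rfl fun u _ => Finset.sum_union h

lemma wE_empty_right (S : Finset V) : wE G w S ∅ = 0 := by
  rw [wE_eq]; simp

include hw in
lemma wdeg_nonneg (v : V) : 0 ≤ wdeg G w v :=
  Finset.sum_nonneg fun e he => (hw e (Finset.mem_filter.1 he).1).le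

include hw in
lemma wvol_nonneg (S : Finset V) : 0 ≤ wvol G w S :=
  Finset.sum_nonneg fun v _ => wdeg_nonneg hw v

lemma wvol_union {S T : Finset V} (h : Disjoint S T) :
    wvol G w (S ∪ T) = wvol G w S + wvol G w T := Finset.sum_union h

/-- Sum of `wE B X` over the parts of a partition of `A` equals `wE A X`. -/
lemma sum_parts_wE {A : Finset V} (P : Finpartition A) (X : Finset V) :
    ∑ B ∈ P.parts, wE G w B X = wE G w A X := by
  simp_rw [wE_eq]
  have hA : P.parts.biUnion id = A := by
    rw [← Finset.sup_eq_biUnion]; exact P.sup_parts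
  conv_rhs => rw [← hA]
  rw [Finset.sum_biUnion P.supIndep.pairwiseDisjoint]
  rfl

include hw in
lemma wdeg_pos_of_adj {u v : V} (h : G.Adj u v) : 0 < wdeg G w u := by
  have hmem : s(u, v) ∈ G.edgeFinset.filter (fun e => u ∈ e) := by
    simp [SimpleGraph.mem_edgeFinset, SimpleGraph.mem_edgeSet, h]
  calc (0:ℝ) < w s(u, v) := w_pos_of_adj hw h
  _ ≤ wdeg G w u := Finset.single_le_sum
      (fun e he => (hw e (Finset.mem_filter.1 he).1).le) hmem

end Aux

/-- Disjoint union of two finpartitions. -/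
def fpUnion {α : Type*} [DecidableEq α] {a b : Finset α}
    (P : Finpartition a) (Q : Finpartition b) (hab : Disjoint a b) :
    Finpartition (a ∪ b) where
  parts := P.parts ∪ Q.parts
  supIndep := by
    rw [Finset.supIndep_iff_pairwiseDisjoint]
    intro x hx y hy hxy
    simp only [Finset.coe_union, Set.mem_union, Finset.mem_coe] at hx hy
    rcases hx with hx | hx <;> rcases hy with hy | hy
    · exact P.supIndep.pairwiseDisjoint hx hy hxy
    · exact (hab.mono (P.le hx) (Q.le hy))
    · exact (hab.symm.mono (Q.le hx) (P.le hy))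
    · exact Q.supIndep.pairwiseDisjoint hx hy hxy
  sup_parts := by rw [Finset.sup_union, P.sup_parts, Q.sup_parts]; rfl
  bot_notMem := by
    rw [Finset.mem_union]
    rintro (h | h)
    · exact P.bot_notMem h
    · exact Q.bot_notMem h

@[simp] lemma fpUnion_parts {α : Type*} [DecidableEq α] {a b : Finset α}
    (P : Finpartition a) (Q : Finpartition b) (hab : Disjoint a b) :
    (fpUnion P Q hab).parts = P.parts ∪ Q.parts := rfl

@[simp] lemma fp_copy_parts {α : Type*} [Lattice α] [OrderBot α] {a b : α}
    (P : Finpartition a) (h : a = b) : (P.copy h).parts = P.parts := rfl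

/-- The key numeric inequality. -/
lemma key_ineq {x y s t : ℝ} (hx : 0 ≤ x) (hy : 0 ≤ y) (h2 : x ≤ (x + y) / 2)
    (hs : 1 ≤ s) (ht : 1 ≤ t) :
    x * (1 + Real.logb 2 s) + y * Real.logb 2 t ≤ (x + y) * Real.logb 2 (s + t) := by
  have hs0 : (0:ℝ) < s := by linarith
  have ht0 : (0:ℝ) < t := by linarith
  have hst : (0:ℝ) < s + t := by linarith
  have hxy : 0 ≤ x + y := by linarith
  rcases le_or_gt (1 + Real.logb 2 s) (Real.logb 2 t) with h | h
  · have h1 : Real.logb 2 t ≤ Real.logb 2 (s + t) :=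
      Real.logb_le_logb_of_le (by norm_num) ht0 (by linarith)
    have h3 : x * (1 + Real.logb 2 s) ≤ x * Real.logb 2 t := by
      exact mul_le_mul_of_nonneg_left h hx
    have h4 : (x + y) * Real.logb 2 t ≤ (x + y) * Real.logb 2 (s + t) :=
      mul_le_mul_of_nonneg_left h1 hxy
    nlinarith
  · have hkey : 1 + Real.logb 2 s + Real.logb 2 t ≤ 2 * Real.logb 2 (s + t) := by
      have e1 : (1:ℝ) + Real.logb 2 s + Real.logb 2 t = Real.logb 2 (2 * (s * t)) := by
        rw [Real.logb_mul (by norm_num) (by positivity),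
          Real.logb_mul (ne_of_gt hs0) (ne_of_gt ht0),
          Real.logb_self_eq_one (by norm_num)]
        ring
      have e2 : 2 * Real.logb 2 (s + t) = Real.logb 2 ((s + t) ^ 2) := by
        rw [Real.logb_pow]; ring
      rw [e1, e2]
      apply Real.logb_le_logb_of_le (by norm_num) (by positivity)
      nlinarith
    -- x * (1 + logb s - logb t) ≤ (x+y)/2 * (1 + logb s - logb t)
    have h5 : x * (1 + Real.logb 2 s - Real.logb 2 t)
        ≤ (x + y) / 2 * (1 + Real.logb 2 s - Real.logb 2 t) :=
      mul_le_mul_of_nonneg_right h2 (by linarith)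
    have h6 : (x + y) * (1 + Real.logb 2 s + Real.logb 2 t) / 2
        ≤ (x + y) * Real.logb 2 (s + t) := by
      have := mul_le_mul_of_nonneg_left hkey hxy
      linarith
    nlinarith

set_option maxHeartbeats 1000000 in
lemma mainrec {V : Type*} [Fintype V] [DecidableEq V] (G : SimpleGraph V) (w : Sym2 V → ℝ)
    (hw : ∀ e ∈ G.edgeFinset, 0 < w e) {φ : ℝ} (hφ : 0 < φ) :
    ∀ (n : ℕ) (A : Finset V), A.card ≤ n →
      ∃ P : Finpartition A,
        (∀ B ∈ P.parts, ∀ S ⊆ B, wvol G w S ≤ wvol G w B / 2 →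
          φ * wvol G w S ≤ wE G w S (B \ S)) ∧
        ∑ B ∈ P.parts, wE G w B (A \ B) ≤
          2 * φ * wvol G w A * Real.logb 2 A.card := by
  intro n
  induction n with
  | zero =>
    intro A hA
    have hAe : A = ∅ := Finset.card_eq_zero.1 (Nat.le_zero.1 hA)
    subst hAe
    refine ⟨(Finpartition.empty (Finset V)).copy bot_eq_empty, ?_, ?_⟩
    · intro B hB; simp [Finpartition.empty] at hB
    · simp [Finpartition.empty, wvol]
  | succ n ih =>
    intro A hA
    rcases A.eq_empty_or_nonempty with rfl | hAne
    · refine ⟨(Finpartition.empty (Finset V)).copy bot_eq_empty, ?_, ?_⟩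
      · intro B hB; simp [Finpartition.empty] at hB
      · simp [Finpartition.empty, wvol]
    by_cases hexp : ∀ S ⊆ A, wvol G w S ≤ wvol G w A / 2 → φ * wvol G w S ≤ wE G w S (A \ S)
    · refine ⟨Finpartition.indiscrete (by simpa [bot_eq_empty] using hAne.ne_empty), ?_, ?_⟩
      · intro B hB
        rw [show (Finpartition.indiscrete
            (by simpa [bot_eq_empty] using hAne.ne_empty : A ≠ ⊥)).parts = {A} from rfl,
          Finset.mem_singleton] at hB
        subst hB; exact hexp
      · rw [show (Finpartition.indiscrete
            (by simpa [bot_eq_empty] using hAne.ne_empty : A ≠ ⊥)).parts = {A} from rfl,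
          Finset.sum_singleton, Finset.sdiff_self]
        have h0 : wE G w A (∅ : Finset V) = 0 := wE_empty_right _
        rw [h0]
        have h1 : (1:ℝ) ≤ A.card := by exact_mod_cast hAne.card_pos
        have h2 : 0 ≤ Real.logb 2 (A.card : ℝ) := Real.logb_nonneg (by norm_num) h1
        have h3 : 0 ≤ wvol G w A := wvol_nonneg hw A
        positivity
    · push_neg at hexp
      obtain ⟨S, hSA, hSvol, hScut⟩ := hexp
      have hwE0 : 0 ≤ wE G w S (A \ S) := wE_nonneg hw _ _
      have hvolS : 0 < wvol G w S := by
        by_contra h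
        push_neg at h
        nlinarith
      have hSne : S.Nonempty := by
        rcases S.eq_empty_or_nonempty with rfl | h
        · simp [wvol] at hvolS
        · exact h
      have hSneqA : S ≠ A := by
        rintro rfl
        linarith
      have hcard1 : S.card ≤ n := by
        have := Finset.card_lt_card (HasSubset.Subset.ssubset_of_ne hSA hSneqA)
        omega
      have hcardsum : S.card + (A \ S).card = A.card := by
        rw [Finset.card_sdiff_of_subset hSA]
        have := Finset.card_le_card hSA
        omega
      have hcard2 : (A \ S).card ≤ n := by
        have := hSne.card_pos
        omega
      obtain ⟨P₁, hP₁e, hP₁s⟩ := ih S hcard1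
      obtain ⟨P₂, hP₂e, hP₂s⟩ := ih (A \ S) hcard2
      have hdisj : Disjoint S (A \ S) := Finset.disjoint_sdiff
      have hUA : S ∪ (A \ S) = A := Finset.union_sdiff_of_subset hSA
      refine ⟨(fpUnion P₁ P₂ hdisj).copy hUA, ?_, ?_⟩
      · intro B hB
        rw [fp_copy_parts, fpUnion_parts, Finset.mem_union] at hB
        rcases hB with h | h
        exacts [hP₁e B h, hP₂e B h]
      · rw [fp_copy_parts, fpUnion_parts]
        have hpartsdisj : Disjoint P₁.parts P₂.parts := by
          rw [Finset.disjoint_left]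
          intro B h1 h2
          have hBne := P₁.nonempty_of_mem_parts h1
          have hBB : Disjoint B B := hdisj.mono (P₁.le h1) (P₂.le h2)
          rw [disjoint_self] at hBB
          exact hBne.ne_empty (by simpa [bot_eq_empty] using hBB)
        rw [Finset.sum_union hpartsdisj]
        have e1 : ∀ B ∈ P₁.parts,
            wE G w B (A \ B) = wE G w B (S \ B) + wE G w B (A \ S) := by
          intro B hB
          have hBS : B ⊆ S := P₁.le hB
          have hsplit : A \ B = (S \ B) ∪ (A \ S) := by
            ext x
            simp only [Finset.mem_sdiff, Finset.mem_union]
            constructor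
            · rintro ⟨hxA, hxB⟩
              by_cases hxS : x ∈ S
              exacts [Or.inl ⟨hxS, hxB⟩, Or.inr ⟨hxA, hxS⟩]
            · rintro (⟨hxS, hxB⟩ | ⟨hxA, hxS⟩)
              exacts [⟨hSA hxS, hxB⟩, ⟨hxA, fun hB' => hxS (hBS hB')⟩]
          rw [hsplit, wE_union_right _ (hdisj.mono_left Finset.sdiff_subset)]
        have e2 : ∀ B ∈ P₂.parts,
            wE G w B (A \ B) = wE G w B ((A \ S) \ B) + wE G w B S := by
          intro B hB
          have hBAS : B ⊆ A \ S := P₂.le hB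
          have hsplit : A \ B = ((A \ S) \ B) ∪ S := by
            ext x
            simp only [Finset.mem_sdiff, Finset.mem_union]
            constructor
            · rintro ⟨hxA, hxB⟩
              by_cases hxS : x ∈ S
              exacts [Or.inr hxS, Or.inl ⟨⟨hxA, hxS⟩, hxB⟩]
            · rintro (⟨⟨hxA, _⟩, hxB⟩ | hxS)
              · exact ⟨hxA, hxB⟩
              · exact ⟨hSA hxS, fun hB' => (Finset.mem_sdiff.1 (hBAS hB')).2 hxS⟩
          rw [hsplit, wE_union_right _ ?_]
          exact (hdisj.symm.mono_left Finset.sdiff_subset)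
        rw [Finset.sum_congr rfl e1, Finset.sum_congr rfl e2,
          Finset.sum_add_distrib, Finset.sum_add_distrib,
          sum_parts_wE P₁ (A \ S), sum_parts_wE P₂ S, wE_comm (A \ S) S]
        -- numeric part
        set x := wvol G w S with hxdef
        set y := wvol G w (A \ S) with hydef
        have hx : 0 ≤ x := wvol_nonneg hw S
        have hy : 0 ≤ y := wvol_nonneg hw (A \ S)
        have hxy : x + y = wvol G w A := by
          rw [← hUA, wvol_union hdisj]
        have h2 : x ≤ (x + y) / 2 := by rw [hxy]; exact hSvol
        have hs : (1:ℝ) ≤ (S.card : ℝ) := by exact_mod_cast hSne.card_pos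
        have hASne : (A \ S).Nonempty := by
          rw [Finset.sdiff_nonempty]
          exact fun h => hSneqA (Finset.Subset.antisymm hSA h)
        have ht : (1:ℝ) ≤ ((A \ S).card : ℝ) := by exact_mod_cast hASne.card_pos
        have hst : (S.card : ℝ) + ((A \ S).card : ℝ) = (A.card : ℝ) := by
          exact_mod_cast congrArg (Nat.cast : ℕ → ℝ) hcardsum
        have hkey := key_ineq hx hy h2 hs ht
        rw [hst, hxy] at hkey
        have hkey2 := mul_le_mul_of_nonneg_left hkey (by linarith : (0:ℝ) ≤ 2 * φ)
        nlinarith [hP₁s, hP₂s, hScut]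

lemma card_mem_edge {V : Type*} [Fintype V] [DecidableEq V] (G : SimpleGraph V)
    {e : Sym2 V} (he : e ∈ G.edgeFinset) :
    (Finset.univ.filter (fun v => v ∈ e)).card = 2 := by
  induction e with
  | _ a b =>
    have hab : a ≠ b := by
      rw [SimpleGraph.mem_edgeFinset, SimpleGraph.mem_edgeSet] at he
      exact he.ne
    have : Finset.univ.filter (fun v => v ∈ s(a, b)) = {a, b} := by
      ext x; simp [Sym2.mem_iff]
    rw [this, Finset.card_pair hab]

lemma handshake {V : Type*} [Fintype V] [DecidableEq V] (G : SimpleGraph V)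
    (w : Sym2 V → ℝ) :
    wvol G w Finset.univ = 2 * ∑ e ∈ G.edgeFinset, w e := by
  unfold wvol wdeg
  simp_rw [Finset.sum_filter]
  rw [Finset.sum_comm, Finset.mul_sum]
  refine Finset.sum_congr rfl fun e he => ?_
  rw [← Finset.sum_filter, Finset.sum_const, card_mem_edge G he]
  rw [nsmul_eq_mul]
  norm_num

lemma wE_isolated_right {V : Type*} [Fintype V] [DecidableEq V] {G : SimpleGraph V}
    {w : Sym2 V → ℝ} (hw : ∀ e ∈ G.edgeFinset, 0 < w e) (X : Finset V) {B : Finset V}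
    (h : ∀ v ∈ B, ¬0 < wdeg G w v) : wE G w X B = 0 := by
  rw [wE_eq]
  refine Finset.sum_eq_zero fun u _ => Finset.sum_eq_zero fun v hv => ?_
  rw [if_neg]
  exact fun hadj => h v hv (wdeg_pos_of_adj hw hadj.symm)

lemma fpParts_disjoint {α : Type*} [DecidableEq α] {a b : Finset α}
    (P : Finpartition a) (Q : Finpartition b) (hab : Disjoint a b) :
    Disjoint P.parts Q.parts := by
  rw [Finset.disjoint_left]
  intro B h1 h2
  have hBne := P.nonempty_of_mem_parts h1
  have hBB : Disjoint B B := hab.mono (P.le h1) (Q.le h2)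
  rw [disjoint_self] at hBB
  exact hBne.ne_empty (by simpa [bot_eq_empty] using hBB)

theorem weighted_expander_decomposition :
    ∃ c : ℝ, 0 < c ∧
      ∀ (V : Type) [Fintype V] [DecidableEq V] (G : SimpleGraph V) (w : Sym2 V → ℝ)
        (φ : ℝ),
        (∀ e ∈ G.edgeFinset, 0 < w e) →
        2 ≤ G.edgeFinset.card → 0 < φ → φ < 1 →
        ∃ P : Finpartition (Finset.univ : Finset V),
          -- Φ^w_{G{Vᵢ}} ≥ φ for every part Vᵢ
          (∀ A ∈ P.parts, ∀ S ⊆ A, wvol G w S ≤ wvol G w A / 2 →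
            φ * wvol G w S ≤ wE G w S (A \ S)) ∧
          -- total weight of inter-cluster edges is at most c·φ·W·(log m)³
          (∑ A ∈ P.parts, wE G w A Aᶜ) ≤
            c * φ * (∑ e ∈ G.edgeFinset, w e) * (Real.log G.edgeFinset.card) ^ 3 := by
  have hl2 : (0:ℝ) < Real.log 2 := Real.log_pos one_lt_two
  refine ⟨16 / (Real.log 2) ^ 3, by positivity, ?_⟩
  intro V _ _ G w φ hw hm hφ hφ1
  set W := ∑ e ∈ G.edgeFinset, w e with hWdef
  have hW : 0 ≤ W := Finset.sum_nonneg fun e he => (hw e he).le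
  set A₀ := Finset.univ.filter (fun v => 0 < wdeg G w v) with hA₀def
  obtain ⟨P₁, hP₁e, hP₁s⟩ := mainrec G w hw hφ A₀.card A₀ le_rfl
  obtain ⟨P₂, hP₂e, hP₂s⟩ :=
    mainrec G w hw hφ (Finset.univ \ A₀).card (Finset.univ \ A₀) le_rfl
  have hdisj : Disjoint A₀ (Finset.univ \ A₀) := Finset.disjoint_sdiff
  have hUA : A₀ ∪ (Finset.univ \ A₀) = Finset.univ :=
    Finset.union_sdiff_of_subset (Finset.subset_univ _)
  have hiso : ∀ v ∈ Finset.univ \ A₀, ¬0 < wdeg G w v := by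
    intro v hv
    rw [Finset.mem_sdiff, hA₀def, Finset.mem_filter] at hv
    exact fun h => hv.2 ⟨Finset.mem_univ v, h⟩
  refine ⟨(fpUnion P₁ P₂ hdisj).copy hUA, ?_, ?_⟩
  · intro B hB
    rw [fp_copy_parts, fpUnion_parts, Finset.mem_union] at hB
    rcases hB with h | h
    exacts [hP₁e B h, hP₂e B h]
  · rw [fp_copy_parts, fpUnion_parts, Finset.sum_union (fpParts_disjoint P₁ P₂ hdisj)]
    -- the P₂ sum vanishes
    have hsum2 : ∑ B ∈ P₂.parts, wE G w B Bᶜ = 0 := by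
      refine Finset.sum_eq_zero fun B hB => ?_
      rw [wE_comm]
      exact wE_isolated_right hw _ fun v hv => hiso v (P₂.le hB hv)
    -- the P₁ sum
    have hsum1 : ∀ B ∈ P₁.parts, wE G w B Bᶜ = wE G w B (A₀ \ B) := by
      intro B hB
      have hBS : B ⊆ A₀ := P₁.le hB
      have hsplit : Bᶜ = (A₀ \ B) ∪ (Finset.univ \ A₀) := by
        ext x
        simp only [Finset.mem_compl, Finset.mem_sdiff, Finset.mem_union, Finset.mem_univ,
          true_and]
        constructor
        · intro hxB
          by_cases hxS : x ∈ A₀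
          exacts [Or.inl ⟨hxS, hxB⟩, Or.inr hxS]
        · rintro (⟨_, hxB⟩ | hxS)
          · exact hxB
          · exact fun hB' => hxS (hBS hB')
      rw [hsplit, wE_union_right _ (hdisj.mono_left Finset.sdiff_subset),
        wE_isolated_right hw _ hiso, add_zero]
    rw [hsum2, add_zero, Finset.sum_congr rfl hsum1]
    -- now bound ∑ B ∈ P₁.parts, wE B (A₀ \ B)
    have hvolA₀ : wvol G w A₀ ≤ 2 * W := by
      have h1 : wvol G w Finset.univ = wvol G w A₀ + wvol G w (Finset.univ \ A₀) := by
        conv_lhs => rw [← hUA]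
        exact wvol_union hdisj
      have h2 := wvol_nonneg hw (Finset.univ \ A₀)
      have h3 := handshake G w
      rw [← hWdef] at h3
      linarith [h1, h2, h3]
    have hcard : A₀.card ≤ 2 * G.edgeFinset.card := by
      have hsub : A₀ ⊆ G.edgeFinset.biUnion fun e => Finset.univ.filter (fun v => v ∈ e) := by
        intro v hv
        rw [hA₀def, Finset.mem_filter] at hv
        rw [Finset.mem_biUnion]
        by_contra h
        push_neg at h
        have hempty : G.edgeFinset.filter (fun e => v ∈ e) = ∅ := by
          rw [Finset.filter_eq_empty_iff]
          intro e he hve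
          exact absurd (Finset.mem_filter.2 ⟨Finset.mem_univ v, hve⟩) (by
            intro hmem
            exact absurd hmem (by simpa using h e he))
        have : wdeg G w v = 0 := by rw [wdeg, hempty, Finset.sum_empty]
        linarith [hv.2]
      calc A₀.card ≤ (G.edgeFinset.biUnion fun e => Finset.univ.filter (fun v => v ∈ e)).card :=
            Finset.card_le_card hsub
        _ ≤ ∑ e ∈ G.edgeFinset, (Finset.univ.filter (fun v => v ∈ e)).card :=
            Finset.card_biUnion_le
        _ = ∑ e ∈ G.edgeFinset, 2 := Finset.sum_congr rfl fun e he => card_mem_edge G he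
        _ = 2 * G.edgeFinset.card := by rw [Finset.sum_const, smul_eq_mul, mul_comm]
    set m := G.edgeFinset.card with hmdef
    have hm2 : (2:ℝ) ≤ (m : ℝ) := by exact_mod_cast hm
    have hmR : (A₀.card : ℝ) ≤ 2 * (m : ℝ) := by exact_mod_cast hcard
    have hlogb0 : 0 ≤ Real.logb 2 (A₀.card : ℝ) := by
      rcases Nat.eq_zero_or_pos A₀.card with h | h
      · rw [h]; simp
      · exact Real.logb_nonneg one_lt_two (by exact_mod_cast h)
    have hlogb : Real.logb 2 (A₀.card : ℝ) ≤ Real.logb 2 (2 * (m : ℝ)) := by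
      rcases Nat.eq_zero_or_pos A₀.card with h | h
      · rw [h]
        simpa using Real.logb_nonneg one_lt_two (by linarith : (1:ℝ) ≤ 2 * (m:ℝ))
      · exact Real.logb_le_logb_of_le one_lt_two (by exact_mod_cast h) hmR
    have hT : ∑ B ∈ P₁.parts, wE G w B (A₀ \ B)
        ≤ 2 * φ * (2 * W) * Real.logb 2 (2 * (m : ℝ)) := by
      calc ∑ B ∈ P₁.parts, wE G w B (A₀ \ B)
          ≤ 2 * φ * wvol G w A₀ * Real.logb 2 (A₀.card : ℝ) := hP₁s
        _ ≤ 2 * φ * (2 * W) * Real.logb 2 (2 * (m : ℝ)) := by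
            have hv0 := wvol_nonneg hw A₀
            have hlb : 0 ≤ Real.logb 2 (2 * (m:ℝ)) := le_trans hlogb0 hlogb
            have s1 : 2 * φ * wvol G w A₀ * Real.logb 2 (A₀.card : ℝ)
                ≤ 2 * φ * wvol G w A₀ * Real.logb 2 (2 * (m:ℝ)) :=
              mul_le_mul_of_nonneg_left hlogb
                (mul_nonneg (by linarith) hv0)
            have s2 : 2 * φ * wvol G w A₀ * Real.logb 2 (2 * (m:ℝ))
                ≤ 2 * φ * (2 * W) * Real.logb 2 (2 * (m:ℝ)) := by
              have h' : 2 * φ * wvol G w A₀ ≤ 2 * φ * (2 * W) :=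
                mul_le_mul_of_nonneg_left hvolA₀ (by linarith)
              exact mul_le_mul_of_nonneg_right h' hlb
            linarith
    refine le_trans hT ?_
    -- final numeric comparison
    set a := Real.log 2 with hadef
    set b := Real.log (m : ℝ) with hbdef
    have hab : a ≤ b := Real.log_le_log (by norm_num) hm2
    have hlogb2m : Real.logb 2 (2 * (m : ℝ)) = (a + b) / a := by
      rw [Real.logb, Real.log_mul (by norm_num) (by positivity)]
    rw [hlogb2m]
    have key : (a + b) / a ≤ 4 * b ^ 3 / a ^ 3 := by
      rw [div_le_div_iff₀ hl2 (by positivity)]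
      have hb2a : a ^ 3 ≤ b ^ 2 * a := by
        nlinarith [mul_nonneg (mul_nonneg (sub_nonneg.2 hab) (by linarith : (0:ℝ) ≤ a + b)) hl2.le]
      have t1 : b * a ^ 3 ≤ b * (b ^ 2 * a) :=
        mul_le_mul_of_nonneg_left hb2a (by linarith)
      have t2 : a * a ^ 3 ≤ b * a ^ 3 :=
        mul_le_mul_of_nonneg_right hab (by positivity)
      have t3 : (0:ℝ) ≤ b ^ 3 * a := by positivity
      nlinarith [t1, t2, t3]
    calc 2 * φ * (2 * W) * ((a + b) / a) = 4 * φ * W * ((a + b) / a) := by ring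
      _ ≤ 4 * φ * W * (4 * b ^ 3 / a ^ 3) :=
          mul_le_mul_of_nonneg_left key (by positivity)
      _ = 16 * φ * W * b ^ 3 / a ^ 3 := by ring
      _ = 16 / a ^ 3 * φ * W * b ^ 3 := by ring
end
end

section
/- Let G = (V,E,w) be a finite undirected weighted graph with positive edge weights, total weight W = ∑_{e∈E} w(e), and weighted conductance Φ^w_G ≥ φ for some φ ∈ (0,1). Let e_1, …, e_k be distinct edges with ∑_{j≤k} w(e_j) ≤ φ·W/10, and write W_i = ∑_{j≤i} w(e_j) and G_i for G with the edges e_1,…,e_i removed. Then there exist sets ∅ = P_0 ⊆ P_1 ⊆ ⋯ ⊆ P_k ⊆ V such that for every i ∈ {0,…,k}: (1) vol_w(P_i) ≤ 8·W_i/φ; (2) w(E(P_i, V∖P_i)) ≤ 4·W_i; and (3) G_i{V∖P_i} is a weighted φ/6 expander, i.e., for every S ⊆ V∖P_i with vol^{G_i}_w(S) ≤ vol^{G_i}_w(V∖P_i)/2 one has w(E_{G_i}(S, (V∖P_i)∖S)) ≥ (φ/6)·vol^{G_i}_w(S). -/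
/-!
STATEMENT 14 (Weighted expander pruning, Theorem 4.2):
Let `G = (V,E,w)` be a weighted `φ` expander with total weight `W`, and let
`e₁,…,e_k` be distinct edges with total weight at most `φ·W/10`. Writing
`Wᵢ = ∑_{j≤i} w(e_j)` and `Gᵢ` for `G` with `e₁,…,eᵢ` removed, there are sets
`∅ = P₀ ⊆ P₁ ⊆ ⋯ ⊆ P_k ⊆ V` such that for all `i ≤ k`:
(1) `vol_w(Pᵢ) ≤ 8Wᵢ/φ`; (2) `w(E(Pᵢ, V∖Pᵢ)) ≤ 4Wᵢ`;
(3) `Gᵢ{V∖Pᵢ}` is a weighted `φ/6` expander.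
-/

open Finset

noncomputable section
open scoped Classical

set_option linter.unusedSectionVars false

/-- The graph `G` with the first `i` of the edges `e 0, …, e (k-1)` deleted. -/
def delEdges {V : Type*} (G : SimpleGraph V) {k : ℕ} (e : Fin k → Sym2 V) (i : ℕ) :
    SimpleGraph V :=
  G.deleteEdges {s | ∃ j : Fin k, (j : ℕ) < i ∧ e j = s}

namespace ExpanderPruningAux

variable {V : Type*} [Fintype V] [DecidableEq V]

/-! ### Generic helper lemmas -/

lemma mem_edgeFinset_of_adj {G : SimpleGraph V} {a b : V} (h : G.Adj a b) :
    s(a, b) ∈ G.edgeFinset := by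
  rw [SimpleGraph.mem_edgeFinset, SimpleGraph.mem_edgeSet]; exact h

lemma wE_nonneg {G : SimpleGraph V} (w : Sym2 V → ℝ)
    (hw : ∀ s ∈ G.edgeFinset, 0 < w s) {H : SimpleGraph V} (hH : H ≤ G) (S T : Finset V) :
    0 ≤ wE H w S T := by
  refine Finset.sum_nonneg fun p hp => ?_
  exact (hw _ (mem_edgeFinset_of_adj (hH (Finset.mem_filter.mp hp).2))).le

lemma wdeg_nonneg {G : SimpleGraph V} (w : Sym2 V → ℝ)
    (hw : ∀ s ∈ G.edgeFinset, 0 < w s) {H : SimpleGraph V} (hH : H ≤ G) (v : V) :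
    0 ≤ wdeg H w v := by
  refine Finset.sum_nonneg fun s hs => ?_
  exact (hw _ (SimpleGraph.edgeFinset_mono hH (Finset.mem_filter.mp hs).1)).le

lemma wvol_nonneg {G : SimpleGraph V} (w : Sym2 V → ℝ)
    (hw : ∀ s ∈ G.edgeFinset, 0 < w s) {H : SimpleGraph V} (hH : H ≤ G) (S : Finset V) :
    0 ≤ wvol H w S :=
  Finset.sum_nonneg fun v _ => wdeg_nonneg w hw hH v

lemma wvol_graph_mono {G : SimpleGraph V} (w : Sym2 V → ℝ)
    (hw : ∀ s ∈ G.edgeFinset, 0 < w s) {H H' : SimpleGraph V} (h : H' ≤ H) (hHG : H ≤ G)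
    (S : Finset V) : wvol H' w S ≤ wvol H w S := by
  refine Finset.sum_le_sum fun v _ => ?_
  refine Finset.sum_le_sum_of_subset_of_nonneg ?_ fun s hs _ => ?_
  · exact Finset.filter_subset_filter _ (SimpleGraph.edgeFinset_mono h)
  · exact (hw _ (SimpleGraph.edgeFinset_mono hHG (Finset.mem_filter.mp hs).1)).le

lemma wE_graph_mono {G : SimpleGraph V} (w : Sym2 V → ℝ)
    (hw : ∀ s ∈ G.edgeFinset, 0 < w s) {H H' : SimpleGraph V} (h : H' ≤ H) (hHG : H ≤ G)
    (S T : Finset V) : wE H' w S T ≤ wE H w S T := by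
  refine Finset.sum_le_sum_of_subset_of_nonneg ?_ fun p hp _ => ?_
  · intro p hp
    rw [Finset.mem_filter] at hp ⊢
    exact ⟨hp.1, h hp.2⟩
  · exact (hw _ (mem_edgeFinset_of_adj (hHG (Finset.mem_filter.mp hp).2))).le

lemma wvol_empty (H : SimpleGraph V) (w : Sym2 V → ℝ) : wvol H w ∅ = 0 := by
  simp [wvol]

lemma wE_empty_left (H : SimpleGraph V) (w : Sym2 V → ℝ) (T : Finset V) :
    wE H w ∅ T = 0 := by
  simp [wE]

lemma wvol_union (H : SimpleGraph V) (w : Sym2 V → ℝ) {Q S : Finset V} (h : Disjoint Q S) :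
    wvol H w (Q ∪ S) = wvol H w Q + wvol H w S := by
  unfold wvol
  exact Finset.sum_union h

lemma wvol_add_compl (H : SimpleGraph V) (w : Sym2 V → ℝ) (Q : Finset V) :
    wvol H w Q + wvol H w Qᶜ = wvol H w Finset.univ := by
  unfold wvol
  exact Finset.sum_add_sum_compl Q _

/-- Volume as a sum over edges. -/
lemma wvol_sum (H : SimpleGraph V) (w : Sym2 V → ℝ) (S : Finset V) :
    wvol H w S = ∑ s ∈ H.edgeFinset, ((S.filter (· ∈ s)).card : ℝ) * w s := by
  unfold wvol wdeg
  calc ∑ v ∈ S, ∑ s ∈ H.edgeFinset.filter (fun s => v ∈ s), w s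
      = ∑ v ∈ S, ∑ s ∈ H.edgeFinset, if v ∈ s then w s else 0 := by
        exact Finset.sum_congr rfl fun v _ => Finset.sum_filter _ _
    _ = ∑ s ∈ H.edgeFinset, ∑ v ∈ S, if v ∈ s then w s else 0 := Finset.sum_comm
    _ = ∑ s ∈ H.edgeFinset, ((S.filter (· ∈ s)).card : ℝ) * w s := by
        refine Finset.sum_congr rfl fun s _ => ?_
        rw [← Finset.sum_filter, Finset.sum_const, nsmul_eq_mul]

lemma card_filter_mem_le_two (S : Finset V) (s : Sym2 V) :
    (S.filter (· ∈ s)).card ≤ 2 := by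
  induction s using Sym2.ind with
  | _ a b =>
    have h : S.filter (· ∈ s(a, b)) ⊆ {a, b} := by
      intro v hv
      have hv' := (Finset.mem_filter.mp hv).2
      rw [Sym2.mem_iff] at hv'
      simpa using hv'
    calc (S.filter (· ∈ s(a, b))).card ≤ ({a, b} : Finset V).card := Finset.card_le_card h
      _ ≤ 2 := (Finset.card_insert_le a {b}).trans (by simp)

lemma card_filter_mem_univ {G : SimpleGraph V} {s : Sym2 V} (hs : s ∈ G.edgeFinset) :
    ((Finset.univ.filter (· ∈ s)).card : ℝ) = 2 := by
  induction s using Sym2.ind with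
  | _ a b =>
    have hadj : G.Adj a b := by
      rw [SimpleGraph.mem_edgeFinset, SimpleGraph.mem_edgeSet] at hs; exact hs
    have huniv : Finset.univ.filter (· ∈ s(a, b)) = {a, b} := by
      ext v; simp [Sym2.mem_iff]
    rw [huniv, Finset.card_pair hadj.ne]
    norm_num

lemma wvol_univ (G : SimpleGraph V) (w : Sym2 V → ℝ) :
    wvol G w Finset.univ = 2 * ∑ s ∈ G.edgeFinset, w s := by
  rw [wvol_sum, Finset.mul_sum]
  exact Finset.sum_congr rfl fun s hs => by rw [card_filter_mem_univ hs]

/-! ### Lemmas about `delEdges` -/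

variable {k : ℕ}

/-- The finset of the first `i` deleted edges. -/
def Dst (e : Fin k → Sym2 V) (i : ℕ) : Finset (Sym2 V) :=
  (Finset.univ.filter fun j : Fin k => (j : ℕ) < i).image e

/-- `Wᵢ`, the total weight of the first `i` deleted edges. -/
def Wseq (w : Sym2 V → ℝ) (e : Fin k → Sym2 V) (i : ℕ) : ℝ :=
  ∑ j ∈ Finset.univ.filter fun j : Fin k => (j : ℕ) < i, w (e j)

lemma Dst_sum (w : Sym2 V → ℝ) {e : Fin k → Sym2 V} (hinj : Function.Injective e) (i : ℕ) :
    ∑ s ∈ Dst e i, w s = Wseq w e i := by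
  unfold Dst Wseq
  exact Finset.sum_image fun x _ y _ h => hinj h

lemma Dst_subset {G : SimpleGraph V} {e : Fin k → Sym2 V} (he : ∀ j, e j ∈ G.edgeFinset)
    (i : ℕ) : Dst e i ⊆ G.edgeFinset := by
  intro s hs
  rcases Finset.mem_image.mp hs with ⟨j, _, rfl⟩
  exact he j

lemma Wseq_nonneg {G : SimpleGraph V} (w : Sym2 V → ℝ)
    (hw : ∀ s ∈ G.edgeFinset, 0 < w s) {e : Fin k → Sym2 V} (he : ∀ j, e j ∈ G.edgeFinset)
    (i : ℕ) : 0 ≤ Wseq w e i :=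
  Finset.sum_nonneg fun j _ => (hw _ (he j)).le

lemma Wseq_mono {G : SimpleGraph V} (w : Sym2 V → ℝ)
    (hw : ∀ s ∈ G.edgeFinset, 0 < w s) {e : Fin k → Sym2 V} (he : ∀ j, e j ∈ G.edgeFinset)
    {i i' : ℕ} (h : i ≤ i') : Wseq w e i ≤ Wseq w e i' := by
  refine Finset.sum_le_sum_of_subset_of_nonneg ?_ fun j _ _ => (hw _ (he j)).le
  intro j hj
  rw [Finset.mem_filter] at hj ⊢
  exact ⟨hj.1, lt_of_lt_of_le hj.2 h⟩

lemma Wseq_le_total {G : SimpleGraph V} (w : Sym2 V → ℝ)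
    (hw : ∀ s ∈ G.edgeFinset, 0 < w s) {e : Fin k → Sym2 V} (he : ∀ j, e j ∈ G.edgeFinset)
    (i : ℕ) : Wseq w e i ≤ ∑ j : Fin k, w (e j) := by
  refine Finset.sum_le_sum_of_subset_of_nonneg (Finset.filter_subset _ _)
    fun j _ _ => (hw _ (he j)).le

lemma delEdges_adj (G : SimpleGraph V) (e : Fin k → Sym2 V) (i : ℕ) (a b : V) :
    (delEdges G e i).Adj a b ↔ G.Adj a b ∧ s(a, b) ∉ Dst e i := by
  simp only [delEdges, SimpleGraph.deleteEdges_adj, Set.mem_setOf_eq, Dst,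
    Finset.mem_image, Finset.mem_filter, Finset.mem_univ, true_and]

lemma delEdges_le (G : SimpleGraph V) (e : Fin k → Sym2 V) (i : ℕ) :
    delEdges G e i ≤ G :=
  SimpleGraph.deleteEdges_le _

lemma delEdges_anti (G : SimpleGraph V) (e : Fin k → Sym2 V) {i i' : ℕ} (h : i ≤ i') :
    delEdges G e i' ≤ delEdges G e i := by
  intro a b hab
  rw [delEdges_adj] at hab ⊢
  refine ⟨hab.1, fun hmem => hab.2 ?_⟩
  rcases Finset.mem_image.mp hmem with ⟨j, hj, hje⟩
  refine Finset.mem_image.mpr ⟨j, ?_, hje⟩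
  rw [Finset.mem_filter] at hj ⊢
  exact ⟨hj.1, lt_of_lt_of_le hj.2 h⟩

lemma delEdges_zero (G : SimpleGraph V) (e : Fin k → Sym2 V) :
    delEdges G e 0 = G := by
  ext a b
  simp [delEdges]

lemma delEdges_edgeFinset (G : SimpleGraph V) (e : Fin k → Sym2 V) (i : ℕ) :
    (delEdges G e i).edgeFinset = G.edgeFinset \ Dst e i := by
  ext s
  rw [SimpleGraph.mem_edgeFinset]
  simp only [SimpleGraph.mem_edgeFinset, delEdges, SimpleGraph.edgeSet_deleteEdges,
    Set.mem_diff, Set.mem_setOf_eq, Finset.mem_sdiff, Dst, Finset.mem_image,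
    Finset.mem_filter, Finset.mem_univ, true_and]

/-- Volume changes by at most twice the deleted weight. -/
lemma wvol_del_le (G : SimpleGraph V) (w : Sym2 V → ℝ)
    (hw : ∀ s ∈ G.edgeFinset, 0 < w s) {e : Fin k → Sym2 V} (he : ∀ j, e j ∈ G.edgeFinset)
    (hinj : Function.Injective e) (i : ℕ) (S : Finset V) :
    wvol G w S ≤ wvol (delEdges G e i) w S + 2 * Wseq w e i := by
  rw [wvol_sum, wvol_sum, delEdges_edgeFinset, ← Dst_sum w hinj i]
  have hD : Dst e i ⊆ G.edgeFinset := Dst_subset he i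
  rw [← Finset.sum_sdiff hD]
  have h2 : ∑ s ∈ Dst e i, ((S.filter (· ∈ s)).card : ℝ) * w s ≤ 2 * ∑ s ∈ Dst e i, w s := by
    rw [Finset.mul_sum]
    refine Finset.sum_le_sum fun s hs => ?_
    refine mul_le_mul_of_nonneg_right ?_ (hw _ (hD hs)).le
    exact_mod_cast card_filter_mem_le_two S s
  linarith

/-- The cut changes by at most the deleted weight. -/
lemma wE_del_le (G : SimpleGraph V) (w : Sym2 V → ℝ)
    (hw : ∀ s ∈ G.edgeFinset, 0 < w s) {e : Fin k → Sym2 V} (he : ∀ j, e j ∈ G.edgeFinset)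
    (hinj : Function.Injective e) (i : ℕ) {S T : Finset V} (hST : Disjoint S T) :
    wE G w S T ≤ wE (delEdges G e i) w S T + Wseq w e i := by
  rw [← Dst_sum w hinj i]
  set F := (S ×ˢ T).filter (fun p => G.Adj p.1 p.2) with hF
  have hsplit := Finset.sum_filter_add_sum_filter_not F
    (fun p => s(p.1, p.2) ∈ Dst e i) (fun p => w s(p.1, p.2))
  have h1 : F.filter (fun p => ¬ s(p.1, p.2) ∈ Dst e i)
      = (S ×ˢ T).filter (fun p => (delEdges G e i).Adj p.1 p.2) := by
    ext p
    simp only [hF, Finset.mem_filter, delEdges_adj, and_assoc]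
  have h2 : ∑ p ∈ F.filter (fun p => s(p.1, p.2) ∈ Dst e i), w s(p.1, p.2)
      ≤ ∑ s ∈ Dst e i, w s := by
    set F2 := F.filter (fun p => s(p.1, p.2) ∈ Dst e i) with hF2
    have hmemF2 : ∀ p ∈ F2, p.1 ∈ S ∧ p.2 ∈ T ∧ s(p.1, p.2) ∈ Dst e i := by
      intro p hp
      rw [hF2, Finset.mem_filter, hF, Finset.mem_filter, Finset.mem_product] at hp
      exact ⟨hp.1.1.1, hp.1.1.2, hp.2⟩
    have hinj2 : ∀ p ∈ F2, ∀ q ∈ F2, s(p.1, p.2) = s(q.1, q.2) → p = q := by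
      intro p hp q hq hpq
      rcases Sym2.eq_iff.mp hpq with ⟨ha, hb⟩ | ⟨ha, hb⟩
      · exact Prod.ext ha hb
      · exfalso
        have h1' : p.1 ∈ S := (hmemF2 p hp).1
        have h2' : p.1 ∈ T := by rw [ha]; exact (hmemF2 q hq).2.1
        exact Finset.disjoint_left.mp hST h1' h2'
    calc ∑ p ∈ F2, w s(p.1, p.2)
        = ∑ s ∈ F2.image (fun p => s(p.1, p.2)), w s := (Finset.sum_image hinj2).symm
      _ ≤ ∑ s ∈ Dst e i, w s := by
          refine Finset.sum_le_sum_of_subset_of_nonneg ?_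
            fun s hs _ => (hw _ (Dst_subset he i hs)).le
          intro s hs
          rcases Finset.mem_image.mp hs with ⟨p, hp, rfl⟩
          exact (hmemF2 p hp).2.2
  have hGle : wE G w S T = ∑ p ∈ F, w s(p.1, p.2) := rfl
  have hHle : wE (delEdges G e i) w S T
      = ∑ p ∈ F.filter (fun p => ¬ s(p.1, p.2) ∈ Dst e i), w s(p.1, p.2) := by
    rw [h1]; rfl
  linarith

lemma wE_union_right (H : SimpleGraph V) (w : Sym2 V → ℝ) (A : Finset V) {B C : Finset V}
    (hBC : Disjoint B C) : wE H w A (B ∪ C) = wE H w A B + wE H w A C := by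
  unfold wE
  rw [Finset.product_union, Finset.filter_union]
  refine Finset.sum_union ?_
  have hd : Disjoint (A ×ˢ B) (A ×ˢ C) := by
    rw [Finset.disjoint_left]
    intro p hp hp'
    exact Finset.disjoint_left.mp hBC (Finset.mem_product.mp hp).2 (Finset.mem_product.mp hp').2
  exact hd.mono (Finset.filter_subset _ _) (Finset.filter_subset _ _)

lemma wE_union_left (H : SimpleGraph V) (w : Sym2 V → ℝ) {A B : Finset V} (C : Finset V)
    (hAB : Disjoint A B) : wE H w (A ∪ B) C = wE H w A C + wE H w B C := by
  unfold wE
  rw [Finset.union_product, Finset.filter_union]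
  refine Finset.sum_union ?_
  have hd : Disjoint (A ×ˢ C) (B ×ˢ C) := by
    rw [Finset.disjoint_left]
    intro p hp hp'
    exact Finset.disjoint_left.mp hAB (Finset.mem_product.mp hp).1 (Finset.mem_product.mp hp').1
  exact hd.mono (Finset.filter_subset _ _) (Finset.filter_subset _ _)

lemma nonempty_of_wvol_pos {H : SimpleGraph V} {w : Sym2 V → ℝ} {S : Finset V}
    (h : 0 < wvol H w S) : S.Nonempty := by
  rcases S.eq_empty_or_nonempty with rfl | hne
  · rw [wvol_empty] at h; exact absurd h (lt_irrefl 0)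
  · exact hne

/-- The invariant maintained by the pruning process. -/
def Inv (G : SimpleGraph V) (w : Sym2 V → ℝ) (φ : ℝ) {k : ℕ} (e : Fin k → Sym2 V)
    (i : ℕ) (Q : Finset V) : Prop :=
  wE (delEdges G e i) w Q Qᶜ ≤ φ / 6 * wvol G w Q + Wseq w e i ∧
  φ * wvol G w Q ≤ 12 / 5 * Wseq w e i

/-- `Gᵢ{V ∖ Q}` is a `φ/6` weighted expander. -/
def NoViol (G : SimpleGraph V) (w : Sym2 V → ℝ) (φ : ℝ) {k : ℕ} (e : Fin k → Sym2 V)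
    (i : ℕ) (Q : Finset V) : Prop :=
  ∀ S ⊆ Qᶜ, wvol (delEdges G e i) w S ≤ wvol (delEdges G e i) w Qᶜ / 2 →
    (φ / 6) * wvol (delEdges G e i) w S ≤ wE (delEdges G e i) w S (Qᶜ \ S)

end ExpanderPruningAux

open ExpanderPruningAux in
set_option maxHeartbeats 1600000 in
theorem weighted_expander_pruning
    {V : Type*} [Fintype V] [DecidableEq V] (G : SimpleGraph V) (w : Sym2 V → ℝ)
    (φ : ℝ) (k : ℕ) (e : Fin k → Sym2 V)
    (hφ0 : 0 < φ) (hφ1 : φ < 1)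
    (hw : ∀ s ∈ G.edgeFinset, 0 < w s)
    -- G is a weighted φ expander
    (hexp : ∀ S : Finset V, S.Nonempty → S ≠ Finset.univ →
      φ * min (wvol G w S) (wvol G w Sᶜ) ≤ wE G w S Sᶜ)
    -- e₁, …, e_k are distinct edges of G
    (he : ∀ j, e j ∈ G.edgeFinset) (hinj : Function.Injective e)
    -- total weight of deleted edges is at most φ·W/10
    (hk : ∑ j : Fin k, w (e j) ≤ φ * (∑ s ∈ G.edgeFinset, w s) / 10) :
    ∃ P : ℕ → Finset V,
      P 0 = ∅ ∧ (∀ i < k, P i ⊆ P (i + 1)) ∧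
      ∀ i ≤ k,
        -- (1) vol_w(Pᵢ) ≤ 8·Wᵢ/φ
        wvol G w (P i) ≤
          8 * (∑ j ∈ Finset.univ.filter fun j : Fin k => (j : ℕ) < i, w (e j)) / φ ∧
        -- (2) w(E(Pᵢ, V∖Pᵢ)) ≤ 4·Wᵢ
        wE G w (P i) (P i)ᶜ ≤
          4 * (∑ j ∈ Finset.univ.filter fun j : Fin k => (j : ℕ) < i, w (e j)) ∧
        -- (3) Gᵢ{V∖Pᵢ} is a weighted φ/6 expander
        (∀ S ⊆ (P i)ᶜ,
          wvol (delEdges G e i) w S ≤ wvol (delEdges G e i) w (P i)ᶜ / 2 →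
          (φ / 6) * wvol (delEdges G e i) w S ≤
            wE (delEdges G e i) w S ((P i)ᶜ \ S)) := by
  classical
  have hW0 : 0 ≤ ∑ s ∈ G.edgeFinset, w s := Finset.sum_nonneg fun s hs => (hw s hs).le
  set W : ℝ := ∑ s ∈ G.edgeFinset, w s with hWdef
  have hWsk : ∀ i, Wseq w e i ≤ φ * W / 10 :=
    fun i => (Wseq_le_total w hw he i).trans hk
  have hWs0 : ∀ i, 0 ≤ Wseq w e i := Wseq_nonneg w hw he
  have hvol_univ : wvol G w Finset.univ = 2 * W := wvol_univ G w
  -- Key step: adding a violating set preserves the invariant.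
  have key : ∀ (i : ℕ) (Q S : Finset V), Inv G w φ e i Q → S ⊆ Qᶜ →
      wvol (delEdges G e i) w S ≤ wvol (delEdges G e i) w Qᶜ / 2 →
      wE (delEdges G e i) w S (Qᶜ \ S) ≤ φ / 6 * wvol (delEdges G e i) w S →
      Inv G w φ e i (Q ∪ S) := by
    intro i Q S hQ hSQ hSvol hScut
    have hHG : delEdges G e i ≤ G := delEdges_le G e i
    set H := delEdges G e i with hHdef
    have hdisj : Disjoint Q S := by
      rw [Finset.disjoint_left]
      intro a haQ haS
      exact (Finset.mem_compl.mp (hSQ haS)) haQ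
    have hQc_split : Qᶜ = (Qᶜ \ S) ∪ S := by
      rw [Finset.sdiff_union_self_eq_union, Finset.union_eq_left.mpr hSQ]
    have hdisj2 : Disjoint (Qᶜ \ S) S := Finset.sdiff_disjoint
    have hcompl : (Q ∪ S)ᶜ = Qᶜ \ S := by
      rw [Finset.compl_union]
      ext a; simp [Finset.mem_sdiff, and_comm]
    -- cut algebra
    have hcutalg : wE H w (Q ∪ S) (Q ∪ S)ᶜ ≤ wE H w Q Qᶜ + wE H w S (Qᶜ \ S) := by
      have e1 : wE H w (Q ∪ S) (Q ∪ S)ᶜ = wE H w Q (Qᶜ \ S) + wE H w S (Qᶜ \ S) := by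
        rw [hcompl, wE_union_left H w (Qᶜ \ S) hdisj]
      have e2 : wE H w Q Qᶜ = wE H w Q (Qᶜ \ S) + wE H w Q S := by
        conv_lhs => rw [hQc_split]
        exact wE_union_right H w Q hdisj2
      have e3 : 0 ≤ wE H w Q S := wE_nonneg w hw hHG Q S
      linarith
    -- volumes
    have hvSH : wvol H w S ≤ wvol G w S := wvol_graph_mono w hw hHG le_rfl S
    have hvSG : wvol G w S ≤ wvol H w S + 2 * Wseq w e i :=
      wvol_del_le G w hw he hinj i S
    have hvQc : wvol H w Qᶜ ≤ wvol G w Qᶜ := wvol_graph_mono w hw hHG le_rfl Qᶜ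
    have hvcompl : wvol G w Q + wvol G w Qᶜ = 2 * W := by
      rw [wvol_add_compl, hvol_univ]
    have hvunion : wvol G w (Q ∪ S) = wvol G w Q + wvol G w S := wvol_union G w hdisj
    have hvQ0 : 0 ≤ wvol G w Q := wvol_nonneg w hw le_rfl Q
    have hvS0 : 0 ≤ wvol G w S := wvol_nonneg w hw le_rfl S
    have hvSH0 : 0 ≤ wvol H w S := wvol_nonneg w hw hHG S
    obtain ⟨hQ1, hQ2⟩ := hQ
    -- the first component of the invariant
    have inv1 : wE H w (Q ∪ S) (Q ∪ S)ᶜ ≤ φ / 6 * wvol G w (Q ∪ S) + Wseq w e i := by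
      have hS6 : wE H w S (Qᶜ \ S) ≤ φ / 6 * wvol G w S := by
        refine hScut.trans ?_
        have := mul_le_mul_of_nonneg_left hvSH (by positivity : (0:ℝ) ≤ φ / 6)
        linarith
      rw [hvunion]
      calc wE H w (Q ∪ S) (Q ∪ S)ᶜ ≤ wE H w Q Qᶜ + wE H w S (Qᶜ \ S) := hcutalg
        _ ≤ (φ / 6 * wvol G w Q + Wseq w e i) + φ / 6 * wvol G w S := by linarith
        _ = φ / 6 * (wvol G w Q + wvol G w S) + Wseq w e i := by ring
    refine ⟨inv1, ?_⟩
    -- the second component: by contradiction via expansion of G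
    by_contra hcon
    push_neg at hcon
    -- a priori upper bound on the new volume
    have hub : wvol G w (Q ∪ S) ≤ wvol G w Q / 2 + W + 2 * Wseq w e i := by
      have h1 : wvol G w S ≤ wvol H w Qᶜ / 2 + 2 * Wseq w e i := by linarith
      have h2 : wvol H w Qᶜ ≤ 2 * W - wvol G w Q := by linarith
      rw [hvunion]; linarith
    have hφQ : φ * wvol G w Q ≤ 12 / 5 * Wseq w e i := hQ2
    have hWsi : Wseq w e i ≤ φ * W / 10 := hWsk i
    have hv132 : wvol G w (Q ∪ S) ≤ 33 / 25 * W := by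
      nlinarith [hWs0 i, mul_le_mul_of_nonneg_left hub hφ0.le,
        mul_nonneg (sub_nonneg.mpr hφ1.le) (hWs0 i)]
    have hvpos : 0 < wvol G w (Q ∪ S) := by
      rcases lt_or_ge 0 (wvol G w (Q ∪ S)) with h | h
      · exact h
      · exfalso
        have hnp : φ * wvol G w (Q ∪ S) ≤ 0 := mul_nonpos_of_nonneg_of_nonpos hφ0.le h
        have := hWs0 i
        linarith
    have hne : (Q ∪ S).Nonempty := nonempty_of_wvol_pos hvpos
    have hnuniv : Q ∪ S ≠ Finset.univ := by
      intro hEq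
      have : wvol G w (Q ∪ S) = 2 * W := by rw [hEq, hvol_univ]
      linarith [hv132, hW0, hvpos]
    have hexp' := hexp (Q ∪ S) hne hnuniv
    have hcutG : wE G w (Q ∪ S) (Q ∪ S)ᶜ ≤ wE H w (Q ∪ S) (Q ∪ S)ᶜ + Wseq w e i :=
      wE_del_le G w hw he hinj i disjoint_compl_right
    have hvolcompl2 : wvol G w (Q ∪ S) + wvol G w (Q ∪ S)ᶜ = 2 * W := by
      rw [wvol_add_compl, hvol_univ]
    rcases le_total (wvol G w (Q ∪ S)) (wvol G w (Q ∪ S)ᶜ) with hmin | hmin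
    · rw [min_eq_left hmin] at hexp'
      linarith [hWs0 i]
    · rw [min_eq_right hmin] at hexp'
      nlinarith [hWs0 i, mul_le_mul_of_nonneg_left hv132 hφ0.le, hW0, hφ0.le,
        mul_le_mul_of_nonneg_left hmin hφ0.le]
  -- Pruning: repeatedly remove violating sets.
  have prune : ∀ (i : ℕ) (n : ℕ) (Q : Finset V), Qᶜ.card ≤ n → Inv G w φ e i Q →
      ∃ Q', Q ⊆ Q' ∧ Inv G w φ e i Q' ∧ NoViol G w φ e i Q' := by
    intro i n
    induction n with
    | zero =>
      intro Q hcard hQ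
      refine ⟨Q, Finset.Subset.refl Q, hQ, ?_⟩
      intro S hS _
      have hQc : Qᶜ = ∅ := Finset.card_eq_zero.mp (Nat.le_zero.mp hcard)
      have hSe : S = ∅ := Finset.subset_empty.mp (hQc ▸ hS)
      subst hSe
      rw [wvol_empty, wE_empty_left]
      simp
    | succ n ih =>
      intro Q hcard hQ
      by_cases hNV : NoViol G w φ e i Q
      · exact ⟨Q, Finset.Subset.refl Q, hQ, hNV⟩
      · simp only [NoViol] at hNV
        push_neg at hNV
        obtain ⟨S, hSQ, hSvol, hScut⟩ := hNV
        have hHG : delEdges G e i ≤ G := delEdges_le G e i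
        have hSne : S.Nonempty := by
          refine nonempty_of_wvol_pos (H := delEdges G e i) (w := w) ?_
          by_contra h
          push_neg at h
          have h0 : 0 ≤ wE (delEdges G e i) w S (Qᶜ \ S) := wE_nonneg w hw hHG _ _
          have hnp : φ / 6 * wvol (delEdges G e i) w S ≤ 0 :=
            mul_nonpos_of_nonneg_of_nonpos (by positivity) h
          linarith
        have hInv' : Inv G w φ e i (Q ∪ S) := key i Q S hQ hSQ hSvol hScut.le
        have hcard' : (Q ∪ S)ᶜ.card ≤ n := by
          have hsub : (Q ∪ S)ᶜ ⊂ Qᶜ := by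
            rw [Finset.compl_union]
            have h1 : Qᶜ ∩ Sᶜ = Qᶜ \ S := by
              ext a; simp [Finset.mem_sdiff, and_comm]
            rw [h1]
            exact Finset.sdiff_ssubset hSQ hSne
          have := Finset.card_lt_card hsub
          omega
        obtain ⟨Q', hQ'1, hQ'2, hQ'3⟩ := ih (Q ∪ S) hcard' hInv'
        exact ⟨Q', (Finset.subset_union_left).trans hQ'1, hQ'2, hQ'3⟩
  -- Stage transition: the invariant survives deleting one more edge.
  have stageStep : ∀ i Q, Inv G w φ e i Q → Inv G w φ e (i + 1) Q := by
    intro i Q hQ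
    obtain ⟨h1, h2⟩ := hQ
    have hmon : wE (delEdges G e (i + 1)) w Q Qᶜ ≤ wE (delEdges G e i) w Q Qᶜ :=
      wE_graph_mono w hw (delEdges_anti G e (Nat.le_succ i)) (delEdges_le G e i) Q Qᶜ
    have hWmon : Wseq w e i ≤ Wseq w e (i + 1) := Wseq_mono w hw he (Nat.le_succ i)
    exact ⟨by linarith, by linarith⟩
  -- Base: the empty set satisfies the invariant and no-violation at stage 0.
  have base_inv : Inv G w φ e 0 ∅ := by
    constructor
    · rw [wE_empty_left, wvol_empty]
      have := hWs0 0
      linarith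
    · rw [wvol_empty]
      have := hWs0 0
      nlinarith
  have base_nv : NoViol G w φ e 0 ∅ := by
    intro S hS hvol
    rw [delEdges_zero G e] at hvol ⊢
    have hcompl : (∅ : Finset V)ᶜ = Finset.univ := by simp
    rw [hcompl] at hvol ⊢
    have hsd : Finset.univ \ S = Sᶜ := by
      ext a; simp
    rw [hsd]
    have hvS0 : 0 ≤ wvol G w S := wvol_nonneg w hw le_rfl S
    have hwE0 : 0 ≤ wE G w S Sᶜ := wE_nonneg w hw le_rfl S Sᶜ
    have hvcompl : wvol G w S + wvol G w Sᶜ = wvol G w Finset.univ := wvol_add_compl G w S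
    rcases S.eq_empty_or_nonempty with rfl | hSne
    · rw [wvol_empty]
      simpa using hwE0
    · by_cases hSu : S = Finset.univ
      · subst hSu
        have hle0 : wvol G w Finset.univ ≤ 0 := by linarith
        have : φ / 6 * wvol G w Finset.univ ≤ 0 :=
          mul_nonpos_of_nonneg_of_nonpos (by positivity) hle0
        linarith
      · have hexp' := hexp S hSne hSu
        have hmin : min (wvol G w S) (wvol G w Sᶜ) = wvol G w S := by
          refine min_eq_left ?_
          linarith
        rw [hmin] at hexp'
        have : 0 ≤ φ * wvol G w S := mul_nonneg hφ0.le hvS0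
        linarith
  -- Build the sequence of sets by induction.
  have main : ∀ i ≤ k, ∃ P : ℕ → Finset V, P 0 = ∅ ∧ (∀ j < i, P j ⊆ P (j + 1)) ∧
      ∀ j ≤ i, Inv G w φ e j (P j) ∧ NoViol G w φ e j (P j) := by
    intro i
    induction i with
    | zero =>
      intro _
      refine ⟨fun _ => ∅, rfl, fun j hj => absurd hj (Nat.not_lt_zero j), ?_⟩
      intro j hj
      have hj0 : j = 0 := Nat.le_zero.mp hj
      subst hj0
      exact ⟨base_inv, base_nv⟩
    | succ i ih =>
      intro hik
      obtain ⟨P, hP0, hPmono, hPgood⟩ := ih (Nat.le_of_succ_le hik)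
      have hInvi : Inv G w φ e i (P i) := (hPgood i le_rfl).1
      have hInv' : Inv G w φ e (i + 1) (P i) := stageStep i (P i) hInvi
      obtain ⟨Q', hQ'1, hQ'2, hQ'3⟩ := prune (i + 1) ((P i)ᶜ.card) (P i) le_rfl hInv'
      refine ⟨fun j => if j ≤ i then P j else Q', ?_, ?_, ?_⟩
      · simp [hP0]
      · intro j hj
        by_cases h1 : j ≤ i
        · by_cases h2 : j + 1 ≤ i
          · simp only [if_pos h1, if_pos h2]
            exact hPmono j (by omega)
          · have hji : j = i := by omega
            subst hji
            simp only [if_pos h1, if_neg h2]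
            exact hQ'1
        · exact absurd hj (by omega)
      · intro j hj
        by_cases h1 : j ≤ i
        · simp only [if_pos h1]
          exact hPgood j h1
        · have hji : j = i + 1 := by omega
          subst hji
          simp only [if_neg h1]
          exact ⟨hQ'2, hQ'3⟩
  obtain ⟨P, hP0, hPmono, hPgood⟩ := main k le_rfl
  refine ⟨P, hP0, fun i hi => hPmono i hi, ?_⟩
  intro i hi
  obtain ⟨⟨hI1, hI2⟩, hNV⟩ := hPgood i hi
  have hWs : (∑ j ∈ Finset.univ.filter fun j : Fin k => (j : ℕ) < i, w (e j)) = Wseq w e i := rfl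
  rw [hWs]
  have hWsi0 : 0 ≤ Wseq w e i := hWs0 i
  refine ⟨?_, ?_, hNV⟩
  · -- (1)
    rw [le_div_iff₀ hφ0]
    nlinarith
  · -- (2)
    have hcutG : wE G w (P i) (P i)ᶜ ≤ wE (delEdges G e i) w (P i) (P i)ᶜ + Wseq w e i :=
      wE_del_le G w hw he hinj i disjoint_compl_right
    have h6 : φ / 6 * wvol G w (P i) ≤ 12 / 5 * Wseq w e i / 6 := by
      have hring : φ / 6 * wvol G w (P i) = (φ * wvol G w (P i)) / 6 := by ring
      rw [hring]
      linarith
    linarith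
end
end

section
/- Let X be a nonempty finite set, n ≥ 1, F : X → ℝⁿ, and let M be a partial matching on X, i.e., a collection of pairwise-disjoint unordered pairs of distinct elements of X. Define F' : X → ℝⁿ by F'(x) = (F(x) + F(y))/2 whenever {x,y} ∈ M, and F'(x) = F(x) if x is not covered by M, and let μ = (1/|X|)·∑_{x∈X} F(x). Then ∑_{x∈X} ‖F(x) − μ‖² − ∑_{x∈X} ‖F'(x) − μ‖² ≥ (1/2)·∑_{{x,y}∈M} ‖F(x) − F(y)‖², where ‖·‖ is the Euclidean norm on ℝⁿ. -/
/-!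
Points not covered by the matching contribute nothing, and for a matched pair `{x, y}` with
midpoint `m = (F x + F y) / 2`, Apollonius' identity
`‖F x - w‖² + ‖F y - w‖² = 2 ‖m - w‖² + ‖F x - F y‖² / 2` shows that replacing both vectors
by `m` lowers the potential by exactly `‖F x - F y‖² / 2`. Hence the claimed inequality is an
equality, and it holds for every centre `w`, not only for the mean of `F`.
-/

open Finset

section

variable {X E : Type*}

theorem Sym2.pairwiseDisjoint_toFinset [DecidableEq X] {M : Finset (Sym2 X)}
    (hdisj : ∀ p ∈ M, ∀ q ∈ M, p ≠ q → ∀ x : X, x ∈ p → x ∉ q) :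
    (M : Set (Sym2 X)).PairwiseDisjoint Sym2.toFinset :=
  fun p hp q hq hpq => disjoint_left.2 fun x hxp hxq =>
    hdisj p hp q hq hpq x (Sym2.mem_toFinset.1 hxp) (Sym2.mem_toFinset.1 hxq)

theorem Finset.sum_eq_sum_sum_toFinset_of_pairwiseDisjoint {β : Type*} [Fintype X]
    [DecidableEq X] [AddCommMonoid β] {M : Finset (Sym2 X)}
    (hM : (M : Set (Sym2 X)).PairwiseDisjoint Sym2.toFinset) {g : X → β}
    (hg : ∀ x, (∀ p ∈ M, x ∉ p) → g x = 0) :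
    ∑ x, g x = ∑ p ∈ M, ∑ x ∈ p.toFinset, g x := by
  rw [← sum_biUnion hM]
  refine (sum_subset (subset_univ _) fun x _ hx => hg x fun p hp hxp => hx ?_).symm
  exact mem_biUnion.2 ⟨p, hp, Sym2.mem_toFinset.2 hxp⟩

section InnerProductSpace

variable [NormedAddCommGroup E] [InnerProductSpace ℝ E]

theorem norm_sub_sq_add_norm_sub_sq_eq (u v w : E) :
    ‖u - w‖ ^ 2 + ‖v - w‖ ^ 2 = 2 * ‖midpoint ℝ u v - w‖ ^ 2 + ‖u - v‖ ^ 2 / 2 := by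
  have := EuclideanGeometry.dist_sq_add_dist_sq_eq_two_mul_dist_midpoint_sq_add_half_dist_sq w u v
  simp only [dist_eq_norm, norm_sub_rev w] at this
  linarith

theorem sum_toFinset_norm_sub_sq_sub_norm_sub_sq_of_eq_midpoint [DecidableEq X]
    {F F' : X → E} {a b : X} (ha : F' a = midpoint ℝ (F a) (F b))
    (hb : F' b = midpoint ℝ (F a) (F b)) (w : E) :
    ∑ x ∈ s(a, b).toFinset, (‖F x - w‖ ^ 2 - ‖F' x - w‖ ^ 2) = ‖F a - F b‖ ^ 2 / 2 := by
  rw [Sym2.toFinset_mk_eq]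
  obtain rfl | hab := eq_or_ne a b
  · simp [ha]
  · rw [sum_pair hab, ha, hb]
    linarith [norm_sub_sq_add_norm_sub_sq_eq (F a) (F b) w]

theorem sum_norm_sub_sq_sub_sum_norm_sub_sq_of_matching [Fintype X] [DecidableEq X]
    (F F' : X → E) (M : Finset (Sym2 X))
    (hdisj : ∀ p ∈ M, ∀ q ∈ M, p ≠ q → ∀ x : X, x ∈ p → x ∉ q)
    (hmatch : ∀ x y : X, s(x, y) ∈ M → F' x = midpoint ℝ (F x) (F y))
    (hfix : ∀ x : X, (∀ p ∈ M, x ∉ p) → F' x = F x) (w : E) :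
    ∑ x, ‖F x - w‖ ^ 2 - ∑ x, ‖F' x - w‖ ^ 2 = (1 / 2) * ∑ p ∈ M,
      Sym2.lift ⟨fun x y => ‖F x - F y‖ ^ 2, fun x y => by simp [norm_sub_rev]⟩ p := by
  rw [← sum_sub_distrib, mul_sum, sum_eq_sum_sum_toFinset_of_pairwiseDisjoint
    (Sym2.pairwiseDisjoint_toFinset hdisj) fun x hx => by simp [hfix x hx]]
  refine sum_congr rfl fun p hp => ?_
  induction p using Sym2.ind with
  | h a b =>
    have hb : F' b = midpoint ℝ (F a) (F b) := by
      rw [hmatch b a (Sym2.eq_swap ▸ hp), midpoint_comm]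
    rw [sum_toFinset_norm_sub_sq_sub_norm_sub_sq_of_eq_midpoint (hmatch a b hp) hb, Sym2.lift_mk]
    ring

end InnerProductSpace

end

theorem matching_potential_reduction
    {X : Type*} [Fintype X] [DecidableEq X] {n : ℕ}
    (F F' : X → EuclideanSpace ℝ (Fin n))
    (M : Finset (Sym2 X))
    -- the pairs of M are pairwise disjoint
    (hdisj : ∀ p ∈ M, ∀ q ∈ M, p ≠ q → ∀ x : X, x ∈ p → x ∉ q)
    -- F' averages the vectors of matched pairs
    (hmatch : ∀ x y : X, s(x, y) ∈ M → F' x = (2 : ℝ)⁻¹ • (F x + F y))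
    -- F' fixes unmatched points
    (hfix : ∀ x : X, (∀ p ∈ M, x ∉ p) → F' x = F x) :
    (1 / 2) * ∑ p ∈ M,
        Sym2.lift ⟨fun x y => ‖F x - F y‖ ^ 2, fun x y => by simp [norm_sub_rev]⟩ p ≤
      (∑ x : X, ‖F x - (Fintype.card X : ℝ)⁻¹ • ∑ y : X, F y‖ ^ 2) -
      (∑ x : X, ‖F' x - (Fintype.card X : ℝ)⁻¹ • ∑ y : X, F y‖ ^ 2) := by
  have hmid : ∀ x y : X, s(x, y) ∈ M → F' x = midpoint ℝ (F x) (F y) := fun x y hxy => by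
    rw [hmatch x y hxy, midpoint_eq_smul_add, invOf_eq_inv]
  exact (sum_norm_sub_sq_sub_sum_norm_sub_sq_of_matching F F' M hdisj hmid hfix _).ge
end

section
/- Let G = (V,E) be a finite undirected graph, φ > 0, and A ⊆ V with R = V∖A, and suppose Φ_{G{A}} ≥ 2φ, i.e., every S' ⊆ A with vol_G(S') ≤ vol_G(A)/2 satisfies |E_G(S', A∖S')| ≥ 2φ·vol_G(S'). Let S ⊆ V be a cut with vol_G(S) ≤ vol_G(V∖S), δ_G(S) ≤ φ·vol_G(S), and vol_G(S ∩ A) ≤ vol_G(A)/2. Then vol_G(S ∩ R) ≥ vol_G(S)/2. -/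
open Finset

noncomputable section
open scoped Classical

section

variable {V : Type*} [Fintype V] [DecidableEq V] (G : SimpleGraph V)

theorem eCount_mono {S S' T T' : Finset V} (hS : S ⊆ S') (hT : T ⊆ T') :
    eCount G S T ≤ eCount G S' T' :=
  card_le_card (filter_subset_filter _ (product_subset_product hS hT))

theorem vol_inter_add_vol_inter_compl (S A : Finset V) :
    vol G (S ∩ A) + vol G (S ∩ Aᶜ) = vol G S := by
  rw [← sdiff_eq_inter_compl]
  exact sum_inter_add_sum_sdiff S A _

theorem eCount_inter_sdiff_le_eCount_compl (S A : Finset V) :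
    eCount G (S ∩ A) (A \ (S ∩ A)) ≤ eCount G S Sᶜ :=
  eCount_mono G inter_subset_left fun v hv => by
    simp only [mem_sdiff, mem_inter] at hv
    exact mem_compl.2 fun hvS => hv.2 ⟨hvS, hv.1⟩

end

theorem low_conductance_cut_overlaps_complement_general
    {V : Type*} [Fintype V] [DecidableEq V] (G : SimpleGraph V) (φ : ℝ) (A : Finset V)
    (hφ : 0 < φ)
    -- Φ_{G{A}} ≥ 2φ
    (hexp : ∀ S' ⊆ A, (vol G S' : ℝ) ≤ (vol G A : ℝ) / 2 →
      2 * φ * (vol G S' : ℝ) ≤ (eCount G S' (A \ S') : ℝ))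
    (S : Finset V)
    (hsparse : (eCount G S Sᶜ : ℝ) ≤ φ * (vol G S : ℝ))
    (hSA : (vol G (S ∩ A) : ℝ) ≤ (vol G A : ℝ) / 2) :
    (vol G S : ℝ) / 2 ≤ (vol G (S ∩ Aᶜ) : ℝ) := by
  have hcut : φ * (2 * vol G (S ∩ A)) ≤ φ * vol G S :=
    calc φ * (2 * vol G (S ∩ A)) = 2 * φ * vol G (S ∩ A) := by ring
      _ ≤ eCount G (S ∩ A) (A \ (S ∩ A)) := hexp _ inter_subset_right hSA
      _ ≤ eCount G S Sᶜ := by exact_mod_cast eCount_inter_sdiff_le_eCount_compl G S A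
      _ ≤ φ * vol G S := hsparse
  have hsplit : (vol G (S ∩ A) : ℝ) + vol G (S ∩ Aᶜ) = vol G S := by
    exact_mod_cast vol_inter_add_vol_inter_compl G S A
  linarith [le_of_mul_le_mul_left hcut hφ]

theorem low_conductance_cut_overlaps_complement
    {V : Type*} [Fintype V] [DecidableEq V] (G : SimpleGraph V) (φ : ℝ) (A : Finset V)
    (hφ : 0 < φ)
    -- Φ_{G{A}} ≥ 2φ
    (hexp : ∀ S' ⊆ A, (vol G S' : ℝ) ≤ (vol G A : ℝ) / 2 →
      2 * φ * (vol G S' : ℝ) ≤ (eCount G S' (A \ S') : ℝ))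
    (S : Finset V)
    (hbal : vol G S ≤ vol G Sᶜ)
    (hsparse : (eCount G S Sᶜ : ℝ) ≤ φ * (vol G S : ℝ))
    (hSA : (vol G (S ∩ A) : ℝ) ≤ (vol G A : ℝ) / 2) :
    (vol G S : ℝ) / 2 ≤ (vol G (S ∩ Aᶜ) : ℝ) :=
  low_conductance_cut_overlaps_complement_general G φ A hφ hexp S hsparse hSA
end
end
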